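/- arXiv:math/0010170 — 3 statements merged into one kernel-verified Lean document; each statement's English description precedes it below -/
import Mathlib

section
/- For each j ∈ {1,2,3}, with δ = δ(j), the function f(z) = I_ν^{(j)}((1-q²)z;q²) satisfies the second-order q-difference equation f(q⁻¹z) - (q^{-ν} + q^{ν}) f(z) + f(qz) = q^{-δ} ((1-q²)²/4) z² f(q^{1-δ} z), for every real z > 0 (for j = 1 restricted to 0 < z < 2q/(1-q²), so that all arguments lie in the disc of convergence). -/
open Real Filter

noncomputable section

/-- Finite q-Pochhammer symbol `(a;q)_n = ∏_{j=0}^{n-1} (1 - a q^j)`. -/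
def qPoch (a q : ℝ) (n : ℕ) : ℝ := ∏ j ∈ Finset.range n, (1 - a * q ^ j)

/-- Infinite q-Pochhammer symbol `(a;q)_∞ = ∏_{j=0}^{∞} (1 - a q^j)`. -/
def qPochInf (a q : ℝ) : ℝ := ∏' j : ℕ, (1 - a * q ^ j)

/-- The q²-Gamma function `Γ_{q²}(x) = (q²;q²)_∞ (1-q²)^{1-x} / (q^{2x};q²)_∞`. -/
def qGamma (q x : ℝ) : ℝ :=
  qPochInf (q ^ 2) (q ^ 2) * (1 - q ^ 2) ^ (1 - x) / qPochInf (q ^ (2 * x)) (q ^ 2)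

/-- The reciprocal `1/Γ_{q²}(x)`, interpreted as `(q^{2x};q²)_∞ (1-q²)^{x-1} / (q²;q²)_∞`
(vanishing at nonpositive integers `x`). -/
def qGammaInv (q x : ℝ) : ℝ :=
  qPochInf (q ^ (2 * x)) (q ^ 2) * (1 - q ^ 2) ^ (x - 1) / qPochInf (q ^ 2) (q ^ 2)

/-- `δ(1) = 2`, `δ(2) = 0`, `δ(3) = 1`. -/
def delta : ℕ → ℝ
  | 1 => 2
  | 2 => 0
  | 3 => 1
  | _ => 0

/-- The modified q-Bessel function of kind `j`: `Iq q j ν z = I_ν^{(j)}((1-q²)z; q²)`.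
The extra power of `q` in the `k`-th term is `q^{(2-δ(j)) k (ν+k)}`, i.e. `1` for `j = 1`,
`q^{2k(ν+k)}` for `j = 2`, and `q^{k(ν+k)}` for `j = 3`. -/
def Iq (q : ℝ) (j : ℕ) (ν z : ℝ) : ℝ :=
  ∑' k : ℕ,
    q ^ ((2 - delta j) * k * (ν + k)) * (1 - q ^ 2) ^ k * (z / 2) ^ (ν + 2 * k)
      / qPoch (q ^ 2) (q ^ 2) k * qGammaInv q (ν + k + 1)

noncomputable def qterm (q c ν w : ℝ) (k : ℕ) : ℝ :=
  q ^ (c * k * (ν + k)) * (1 - q ^ 2) ^ k * (w / 2) ^ (ν + 2 * k)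
    / qPoch (q ^ 2) (q ^ 2) k * qGammaInv q (ν + k + 1)

lemma factor_pos {a q : ℝ} (ha0 : 0 ≤ a) (ha1 : a < 1) (hq0 : 0 < q) (hq1 : q < 1) (j : ℕ) :
    0 < 1 - a * q ^ j := by
  have h1 : a * q ^ j ≤ a := by
    nlinarith [pow_le_one₀ hq0.le hq1.le (n := j), pow_nonneg hq0.le j]
  linarith

lemma summable_log_aux {a q : ℝ} (ha0 : 0 ≤ a) (ha1 : a < 1) (hq0 : 0 < q) (hq1 : q < 1) :
    Summable fun j : ℕ => Real.log (1 - a * q ^ j) := by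
  rw [← summable_neg_iff]
  apply Summable.of_nonneg_of_le (fun j => ?_) (fun j => ?_)
    ((summable_geometric_of_lt_one hq0.le hq1).mul_left (a / (1 - a)))
  · have h := factor_pos ha0 ha1 hq0 hq1 j
    have h2 : a * q ^ j ≥ 0 := by positivity
    have := Real.log_nonpos (by linarith) (by linarith : 1 - a * q ^ j ≤ 1)
    linarith
  · have h := factor_pos ha0 ha1 hq0 hq1 j
    have h2 : 0 ≤ a * q ^ j := by positivity
    have h3 : a * q ^ j ≤ a := by
      nlinarith [pow_le_one₀ hq0.le hq1.le (n := j), pow_nonneg hq0.le j]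
    have h4 := Real.log_le_sub_one_of_pos (inv_pos.mpr h)
    rw [Real.log_inv] at h4
    have e : (1 - a * q ^ j)⁻¹ - 1 = (a * q ^ j) / (1 - a * q ^ j) := by field_simp; ring
    rw [e] at h4
    have h5 : (a * q ^ j) / (1 - a * q ^ j) ≤ (a * q ^ j) / (1 - a) :=
      div_le_div_of_nonneg_left h2 (by linarith) (by linarith)
    have h6 : (a * q ^ j) / (1 - a) = a / (1 - a) * q ^ j := by ring
    linarith [h4, h5, h6 ▸ h5]

lemma multipliable_aux {a q : ℝ} (ha0 : 0 ≤ a) (ha1 : a < 1) (hq0 : 0 < q) (hq1 : q < 1) :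
    Multipliable fun j : ℕ => 1 - a * q ^ j :=
  Real.multipliable_of_summable_log (f := fun j : ℕ => 1 - a * q ^ j)
    (fun j => factor_pos ha0 ha1 hq0 hq1 j)
    (summable_log_aux ha0 ha1 hq0 hq1)

lemma qPochInf_pos {a q : ℝ} (ha0 : 0 ≤ a) (ha1 : a < 1) (hq0 : 0 < q) (hq1 : q < 1) :
    0 < qPochInf a q := by
  have h := Real.rexp_tsum_eq_tprod (f := fun j : ℕ => 1 - a * q ^ j)
    (fun j => factor_pos ha0 ha1 hq0 hq1 j)
    (summable_log_aux ha0 ha1 hq0 hq1)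
  rw [qPochInf]
  rw [← h]
  exact Real.exp_pos _

lemma multipliable_qPochInf {a q : ℝ} (ha0 : 0 ≤ a) (hq0 : 0 < q) (hq1 : q < 1) :
    Multipliable fun j : ℕ => 1 - a * q ^ j := by
  obtain ⟨N, hN⟩ : ∃ N : ℕ, a * q ^ N < 1 := by
    have h0 : Tendsto (fun n : ℕ => a * q ^ n) atTop (nhds 0) := by
      simpa using (tendsto_pow_atTop_nhds_zero_of_lt_one hq0.le hq1).const_mul a
    exact (h0.eventually_lt_const one_pos).exists
  apply Multipliable.comp_nat_add (k := N)
  have he : (fun n : ℕ => 1 - a * q ^ (n + N)) = fun n : ℕ => 1 - (a * q ^ N) * q ^ n := by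
    funext n; rw [pow_add]; ring
  rw [he]
  exact multipliable_aux (by positivity) hN hq0 hq1

lemma qPochInf_split {a q : ℝ} (ha0 : 0 ≤ a) (hq0 : 0 < q) (hq1 : q < 1) :
    qPochInf a q = (1 - a) * qPochInf (a * q) q := by
  rw [qPochInf, qPochInf, tprod_eq_zero_mul' ?hm]
  · congr 1
    · simp
    · apply tprod_congr; intro n; rw [pow_succ]; ring
  case hm =>
    have he : (fun n : ℕ => 1 - a * q ^ (n + 1)) = fun n : ℕ => 1 - (a * q) * q ^ n := by
      funext n; rw [pow_succ]; ring
    rw [he]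
    exact multipliable_qPochInf (by positivity) hq0 hq1

lemma gammaInv_rec {q : ℝ} (hq0 : 0 < q) (hq1 : q < 1) (x : ℝ) :
    (1 - q ^ (2 * x)) * qGammaInv q (x + 1) = (1 - q ^ 2) * qGammaInv q x := by
  have hq2 : (0:ℝ) < q ^ 2 := by positivity
  have hq2' : q ^ 2 < 1 := by nlinarith
  have hsplit : qPochInf (q ^ (2 * x)) (q ^ 2)
      = (1 - q ^ (2 * x)) * qPochInf (q ^ (2 * x) * q ^ 2) (q ^ 2) :=
    qPochInf_split (Real.rpow_nonneg hq0.le _) hq2 hq2'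
  have harg : q ^ (2 * x) * q ^ 2 = q ^ (2 * (x + 1)) := by
    rw [← Real.rpow_natCast q 2, ← Real.rpow_add hq0]
    norm_num; ring_nf
  have hpow : (1 - q ^ 2) ^ (x + 1 - 1) = (1 - q ^ 2) ^ (x - 1) * (1 - q ^ 2) := by
    have : x + 1 - 1 = (x - 1) + 1 := by ring
    rw [this, Real.rpow_add_one (by linarith : (1:ℝ) - q ^ 2 ≠ 0)]
  rw [qGammaInv, qGammaInv, hpow, hsplit, harg]
  ring

lemma qPoch_pos {q : ℝ} (hq0 : 0 < q) (hq1 : q < 1) (k : ℕ) :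
    0 < qPoch (q ^ 2) (q ^ 2) k := by
  apply Finset.prod_pos
  intro j _
  exact factor_pos (by positivity) (by nlinarith) (by positivity) (by nlinarith) j

lemma qGammaInv_pos {q : ℝ} (hq0 : 0 < q) (hq1 : q < 1) {x : ℝ} (hx : 0 < x) :
    0 < qGammaInv q x := by
  have hq2 : (0:ℝ) < q ^ 2 := by positivity
  have hq2' : q ^ 2 < 1 := by nlinarith
  have h1 : q ^ (2 * x) < 1 := Real.rpow_lt_one hq0.le hq1 (by positivity)
  have h2 : (0:ℝ) ≤ q ^ (2 * x) := Real.rpow_nonneg hq0.le _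
  unfold qGammaInv
  have := qPochInf_pos h2 h1 hq2 hq2'
  have := qPochInf_pos hq2.le hq2' hq2 hq2'
  have : (0:ℝ) < (1 - q ^ 2) ^ (x - 1) := Real.rpow_pos_of_pos (by linarith) _
  positivity

lemma qterm_pos {q c ν w : ℝ} (hq0 : 0 < q) (hq1 : q < 1) (hw : 0 < w) {k : ℕ}
    (hk : 0 < ν + k + 1) : 0 < qterm q c ν w k := by
  have h1 : (0:ℝ) < q ^ (c * k * (ν + k)) := Real.rpow_pos_of_pos hq0 _
  have hq2' : (0:ℝ) < 1 - q ^ 2 := by nlinarith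
  have h2 : (0:ℝ) < (1 - q ^ 2) ^ k := by positivity
  have h3 : (0:ℝ) < (w / 2) ^ (ν + 2 * k) := Real.rpow_pos_of_pos (by linarith) _
  have h4 := qPoch_pos hq0 hq1 k
  have h5 := qGammaInv_pos hq0 hq1 hk
  unfold qterm
  positivity

lemma qterm_succ {q c ν w : ℝ} (hq0 : 0 < q) (hq1 : q < 1) (hw : 0 < w) {k : ℕ}
    (hk : 0 < ν + k + 1) :
    qterm q c ν w (k + 1) = qterm q c ν w k *
      (q ^ (c * (ν + 2 * k + 1)) * ((1 - q ^ 2) ^ 2 * (w / 2) ^ 2)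
        / ((1 - q ^ 2 * (q ^ 2) ^ k) * (1 - q ^ (2 * (ν + k + 1))))) := by
  have hq2 : (0:ℝ) < q ^ 2 := by positivity
  have hq2' : q ^ 2 < 1 := by nlinarith
  have hA : q ^ (c * (k+1 : ℕ) * (ν + (k+1 : ℕ))) =
      q ^ (c * k * (ν + k)) * q ^ (c * (ν + 2 * k + 1)) := by
    rw [← Real.rpow_add hq0]
    push_cast
    ring_nf
  have hB : ((1 : ℝ) - q ^ 2) ^ (k + 1) = (1 - q ^ 2) ^ k * (1 - q ^ 2) := pow_succ _ _
  have hC : (w / 2) ^ (ν + 2 * ((k:ℝ) + 1)) = (w / 2) ^ (ν + 2 * k) * (w / 2) ^ (2:ℕ) := by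
    rw [← Real.rpow_natCast (w/2) 2, ← Real.rpow_add (by linarith : (0:ℝ) < w / 2)]
    norm_num
    ring_nf
  have hP : qPoch (q ^ 2) (q ^ 2) (k + 1)
      = qPoch (q ^ 2) (q ^ 2) k * (1 - q ^ 2 * (q ^ 2) ^ k) := Finset.prod_range_succ _ _
  have hd1 : (0:ℝ) < 1 - q ^ 2 * (q ^ 2) ^ k := factor_pos hq2.le hq2' hq2 hq2' k
  have hd2 : (0:ℝ) < 1 - q ^ (2 * (ν + k + 1)) := by
    have : q ^ (2 * (ν + k + 1)) < 1 := Real.rpow_lt_one hq0.le hq1 (by positivity)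
    linarith
  have hG : qGammaInv q (ν + (k + 1 : ℕ) + 1)
      = (1 - q ^ 2) * qGammaInv q (ν + k + 1) / (1 - q ^ (2 * (ν + k + 1))) := by
    rw [eq_div_iff hd2.ne']
    have := gammaInv_rec hq0 hq1 (ν + k + 1)
    push_cast
    rw [show (ν + ((k:ℝ) + 1) + 1) = (ν + k + 1) + 1 by ring]
    linarith [this]
  have hPk := (qPoch_pos hq0 hq1 k).ne'
  unfold qterm
  rw [hA, hB, hP, hG]
  rw [show (ν + 2 * ((k+1:ℕ):ℝ)) = ν + 2 * ((k:ℝ) + 1) by push_cast; ring, hC]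
  field_simp

lemma summable_qterm {q c ν w : ℝ} (hq0 : 0 < q) (hq1 : q < 1) (hc : 0 ≤ c) (hw : 0 < w)
    (hcw : c = 0 → (1 - q ^ 2) * w < 2) : Summable (qterm q c ν w) := by
  have hq2 : (0:ℝ) < q ^ 2 := by positivity
  have hq2' : q ^ 2 < 1 := by nlinarith
  set r : ℕ → ℝ := fun k => q ^ (c * (ν + 2 * k + 1)) * ((1 - q ^ 2) ^ 2 * (w / 2) ^ 2)
        / ((1 - q ^ 2 * (q ^ 2) ^ k) * (1 - q ^ (2 * (ν + k + 1)))) with hr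
  -- eventual positivity index
  obtain ⟨N, hN⟩ : ∃ N : ℕ, 0 < ν + N + 1 := by
    obtain ⟨N, hN⟩ := exists_nat_gt (-ν - 1)
    exact ⟨N, by linarith⟩
  have hk' : ∀ k : ℕ, N ≤ k → 0 < ν + k + 1 := by
    intro k hkN
    have : (N:ℝ) ≤ k := Nat.cast_le.mpr hkN
    linarith
  -- denominators tend to 1
  have hgeo : Tendsto (fun k : ℕ => (q ^ 2) ^ k) atTop (nhds 0) :=
    tendsto_pow_atTop_nhds_zero_of_lt_one hq2.le hq2'
  have hden : Tendsto (fun k : ℕ => (1 - q ^ 2 * (q ^ 2) ^ k) * (1 - q ^ (2 * (ν + k + 1))))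
      atTop (nhds 1) := by
    have h1 : Tendsto (fun k : ℕ => 1 - q ^ 2 * (q ^ 2) ^ k) atTop (nhds 1) := by
      simpa using (tendsto_const_nhds (x := (1:ℝ)) (f := atTop)).sub (hgeo.const_mul (q ^ 2))
    have h2 : Tendsto (fun k : ℕ => 1 - q ^ (2 * (ν + k + 1))) atTop (nhds 1) := by
      have he : (fun k : ℕ => q ^ (2 * (ν + k + 1))) = fun k : ℕ => q ^ (2 * (ν + 1)) * (q ^ 2) ^ k := by
        funext k
        rw [show (2:ℝ) * (ν + k + 1) = 2 * (ν + 1) + 2 * k by ring, Real.rpow_add hq0]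
        congr 1
        rw [show ((2:ℝ) * (k:ℝ)) = ((2 * k : ℕ) : ℝ) by push_cast; ring,
          Real.rpow_natCast, pow_mul]
      have : Tendsto (fun k : ℕ => q ^ (2 * (ν + k + 1))) atTop (nhds 0) := by
        rw [he]; simpa using hgeo.const_mul (q ^ (2 * (ν + 1)))
      simpa using (tendsto_const_nhds (x := (1:ℝ)) (f := atTop)).sub this
    simpa using h1.mul h2
  -- split on c = 0
  rcases eq_or_lt_of_le hc with hc0 | hcpos
  · -- c = 0 : ratio tends to ((1-q²)w/2)²
    have hL : (1 - q ^ 2) ^ 2 * (w / 2) ^ 2 < 1 := by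
      have h := hcw hc0.symm
      have h2 : 0 ≤ (1 - q ^ 2) * w := mul_nonneg (by nlinarith) hw.le
      nlinarith
    apply summable_of_ratio_test_tendsto_lt_one hL
    · filter_upwards [eventually_ge_atTop N] with k hkN
      exact (qterm_pos hq0 hq1 hw (hk' k hkN)).ne'
    · have hnum : ∀ k : ℕ, q ^ (c * (ν + 2 * (k:ℝ) + 1)) = 1 := by
        intro k
        rw [← hc0]
        norm_num
      have hrt : Tendsto r atTop (nhds ((1 - q ^ 2) ^ 2 * (w / 2) ^ 2)) := by
        have ht := (tendsto_const_nhds (x := (1 - q ^ 2) ^ 2 * (w / 2) ^ 2)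
          (f := atTop)).div hden one_ne_zero
        simp only [div_one] at ht
        apply ht.congr
        intro k
        rw [hr]
        simp only [hnum k, one_mul, Pi.div_apply]
      apply hrt.congr'
      filter_upwards [eventually_ge_atTop N] with k hkN
      have hpos := qterm_pos (c := c) hq0 hq1 hw (hk' k hkN)
      have hrpos : 0 < r k := by
        have hd1 : (0:ℝ) < 1 - q ^ 2 * (q ^ 2) ^ k := by
          have h1 : (q ^ 2) ^ k ≤ 1 := pow_le_one₀ hq2.le hq2'.le
          nlinarith
        have hd2 : (0:ℝ) < 1 - q ^ (2 * (ν + k + 1)) := by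
          have : q ^ (2 * (ν + k + 1)) < 1 :=
            Real.rpow_lt_one hq0.le hq1 (by have := hk' k hkN; positivity)
          linarith
        have := Real.rpow_pos_of_pos hq0 (c * (ν + 2 * k + 1))
        rw [hr]
        have hw2 : (0:ℝ) < (w / 2) ^ 2 := by positivity
        have h12 : (0:ℝ) < (1 - q^2)^2 := by nlinarith
        simp only [hr]
        exact div_pos (mul_pos this (mul_pos h12 hw2)) (mul_pos hd1 hd2)
      rw [qterm_succ hq0 hq1 hw (hk' k hkN), norm_mul, Real.norm_eq_abs, Real.norm_eq_abs,
        abs_of_pos hpos, abs_of_pos hrpos, mul_comm, mul_div_assoc, div_self hpos.ne', mul_one]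
  · -- c > 0 : ratio tends to 0
    apply summable_of_ratio_test_tendsto_lt_one one_pos
    · filter_upwards [eventually_ge_atTop N] with k hkN
      exact (qterm_pos hq0 hq1 hw (hk' k hkN)).ne'
    · have hnum : Tendsto (fun k : ℕ => q ^ (c * (ν + 2 * k + 1)) * ((1 - q ^ 2) ^ 2 * (w / 2) ^ 2))
          atTop (nhds 0) := by
        have he : (fun k : ℕ => q ^ (c * (ν + 2 * k + 1)))
            = fun k : ℕ => q ^ (c * (ν + 1)) * (q ^ (2 * c)) ^ k := by
          funext k
          rw [show c * (ν + 2 * k + 1) = c * (ν + 1) + (2 * c) * k by ring, Real.rpow_add hq0]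
          congr 1
          rw [← Real.rpow_natCast (q ^ ((2:ℝ) * c)) k, ← Real.rpow_mul hq0.le]
        have hg2 : Tendsto (fun k : ℕ => (q ^ ((2:ℝ) * c)) ^ k) atTop (nhds 0) :=
          tendsto_pow_atTop_nhds_zero_of_lt_one (Real.rpow_nonneg hq0.le _)
            (Real.rpow_lt_one hq0.le hq1 (by positivity))
        have : Tendsto (fun k : ℕ => q ^ (c * (ν + 2 * k + 1))) atTop (nhds 0) := by
          rw [he]; simpa using hg2.const_mul (q ^ (c * (ν + 1)))
        simpa using this.mul_const ((1 - q ^ 2) ^ 2 * (w / 2) ^ 2)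
      have hrt : Tendsto r atTop (nhds 0) := by
        rw [hr]
        have := hnum.div hden one_ne_zero
        rw [zero_div] at this
        exact this
      apply hrt.congr'
      filter_upwards [eventually_ge_atTop N] with k hkN
      have hpos := qterm_pos (c := c) hq0 hq1 hw (hk' k hkN)
      have hrpos : 0 < r k := by
        have hd1 : (0:ℝ) < 1 - q ^ 2 * (q ^ 2) ^ k := by
          have h1 : (q ^ 2) ^ k ≤ 1 := pow_le_one₀ hq2.le hq2'.le
          nlinarith
        have hd2 : (0:ℝ) < 1 - q ^ (2 * (ν + k + 1)) := by
          have : q ^ (2 * (ν + k + 1)) < 1 :=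
            Real.rpow_lt_one hq0.le hq1 (by have := hk' k hkN; positivity)
          linarith
        have := Real.rpow_pos_of_pos hq0 (c * (ν + 2 * k + 1))
        rw [hr]
        have hw2 : (0:ℝ) < (w / 2) ^ 2 := by positivity
        have h12 : (0:ℝ) < (1 - q^2)^2 := by nlinarith
        simp only [hr]
        exact div_pos (mul_pos this (mul_pos h12 hw2)) (mul_pos hd1 hd2)
      rw [qterm_succ hq0 hq1 hw (hk' k hkN), norm_mul, Real.norm_eq_abs, Real.norm_eq_abs,
        abs_of_pos hpos, abs_of_pos hrpos, mul_comm, mul_div_assoc, div_self hpos.ne', mul_one]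

lemma qterm_step {q ν z d : ℝ} (hq0 : 0 < q) (hq1 : q < 1) (hz : 0 < z) (m : ℕ) :
    qterm q (2 - d) ν (q⁻¹ * z) (m + 1) - (q ^ (-ν) + q ^ ν) * qterm q (2 - d) ν z (m + 1)
      + qterm q (2 - d) ν (q * z) (m + 1)
    = q ^ (-d) * ((1 - q ^ 2) ^ 2 / 4) * z ^ 2 * qterm q (2 - d) ν (q ^ (1 - d) * z) m := by
  have hq2' : q ^ 2 < 1 := by nlinarith
  have hz2 : (0:ℝ) < z / 2 := by linarith
  have hs : ∀ u t : ℝ, 0 < u → (u * z / 2) ^ t = u ^ t * (z / 2) ^ t := by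
    intro u t hu
    rw [show u * z / 2 = u * (z / 2) by ring, Real.mul_rpow hu.le hz2.le]
  set e : ℝ := ν + 2 * ((m:ℝ) + 1) with he
  -- bracket identity
  have h1 : q ^ (-e) * q ^ (2 * ((m:ℝ) + 1)) = q ^ (-ν) := by
    rw [← Real.rpow_add hq0]; congr 1; rw [he]; ring
  have h2 : q ^ (-e) * q ^ (2 * (ν + (m:ℝ) + 1)) = q ^ ν := by
    rw [← Real.rpow_add hq0]; congr 1; rw [he]; ring
  have h3 : q ^ (-e) * q ^ (2 * ((m:ℝ) + 1)) * q ^ (2 * (ν + (m:ℝ) + 1)) = q ^ e := by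
    rw [← Real.rpow_add hq0, ← Real.rpow_add hq0]; congr 1; rw [he]; ring
  have hBr : (q⁻¹) ^ e - (q ^ (-ν) + q ^ ν) + q ^ e
      = q ^ (-e) * (1 - q ^ (2 * ((m:ℝ) + 1))) * (1 - q ^ (2 * (ν + (m:ℝ) + 1))) := by
    rw [Real.inv_rpow hq0.le, ← Real.rpow_neg hq0.le]
    linear_combination h1 + h2 - h3
  -- Pochhammer step
  have hX1 : (0:ℝ) < 1 - q ^ (2 * ((m:ℝ) + 1)) := by
    have : q ^ (2 * ((m:ℝ) + 1)) < 1 := Real.rpow_lt_one hq0.le hq1 (by positivity)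
    linarith
  have hP : qPoch (q ^ 2) (q ^ 2) (m + 1)
      = qPoch (q ^ 2) (q ^ 2) m * (1 - q ^ (2 * ((m:ℝ) + 1))) := by
    show (∏ j ∈ Finset.range (m+1), (1 - q ^ 2 * (q ^ 2) ^ j)) = _
    rw [Finset.prod_range_succ]
    congr 2
    rw [show (2 * ((m:ℝ) + 1)) = ((2 * (m + 1) : ℕ) : ℝ) by push_cast; ring,
      Real.rpow_natCast, pow_mul, pow_succ]
    ring
  -- Gamma step
  have hG : (1 - q ^ (2 * (ν + (m:ℝ) + 1))) * qGammaInv q (ν + ((m:ℝ) + 1) + 1)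
      = (1 - q ^ 2) * qGammaInv q (ν + (m:ℝ) + 1) := by
    have := gammaInv_rec hq0 hq1 (ν + (m:ℝ) + 1)
    rw [show ν + (m:ℝ) + 1 + 1 = ν + ((m:ℝ) + 1) + 1 by ring] at this
    exact this
  -- q-power exponent identity
  have hA : q ^ (-e) * q ^ ((2 - d) * ((m:ℝ) + 1) * (ν + ((m:ℝ) + 1)))
      = q ^ (-d) * (q ^ ((1 - d) * (ν + 2 * (m:ℝ))) * q ^ ((2 - d) * (m:ℝ) * (ν + (m:ℝ)))) := by
    rw [← Real.rpow_add hq0, ← Real.rpow_add hq0, ← Real.rpow_add hq0]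
    congr 1; rw [he]; ring
  -- (z/2) power split
  have hS : (z / 2) ^ e = (z / 2) ^ (ν + 2 * (m:ℝ)) * (z / 2) ^ 2 := by
    rw [show e = (ν + 2 * (m:ℝ)) + ((2:ℕ):ℝ) by rw [he]; push_cast; ring,
      Real.rpow_add hz2, Real.rpow_natCast]
  have hPm := (qPoch_pos hq0 hq1 m).ne'
  -- now compute
  unfold qterm
  push_cast
  rw [hs q⁻¹ _ (by positivity), hs q _ hq0, hs (q ^ (1 - d)) _ (Real.rpow_pos_of_pos hq0 _),
    ← Real.rpow_mul hq0.le, hP]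
  calc q ^ ((2-d) * ((m:ℝ)+1) * (ν + ((m:ℝ)+1))) * (1 - q ^ 2) ^ (m+1)
        * ((q⁻¹) ^ (ν + 2*((m:ℝ)+1)) * (z/2) ^ (ν + 2*((m:ℝ)+1)))
        / (qPoch (q ^ 2) (q ^ 2) m * (1 - q ^ (2 * ((m:ℝ) + 1)))) * qGammaInv q (ν + ((m:ℝ)+1) + 1)
      - (q ^ (-ν) + q ^ ν) * (q ^ ((2-d) * ((m:ℝ)+1) * (ν + ((m:ℝ)+1))) * (1 - q ^ 2) ^ (m+1)
        * (z/2) ^ (ν + 2*((m:ℝ)+1))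
        / (qPoch (q ^ 2) (q ^ 2) m * (1 - q ^ (2 * ((m:ℝ) + 1)))) * qGammaInv q (ν + ((m:ℝ)+1) + 1))
      + q ^ ((2-d) * ((m:ℝ)+1) * (ν + ((m:ℝ)+1))) * (1 - q ^ 2) ^ (m+1)
        * (q ^ (ν + 2*((m:ℝ)+1)) * (z/2) ^ (ν + 2*((m:ℝ)+1)))
        / (qPoch (q ^ 2) (q ^ 2) m * (1 - q ^ (2 * ((m:ℝ) + 1)))) * qGammaInv q (ν + ((m:ℝ)+1) + 1)
      = ((q⁻¹) ^ e - (q ^ (-ν) + q ^ ν) + q ^ e)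
        * (q ^ ((2-d) * ((m:ℝ)+1) * (ν + ((m:ℝ)+1))) * (1 - q ^ 2) ^ (m+1) * (z/2) ^ e
          / (qPoch (q ^ 2) (q ^ 2) m * (1 - q ^ (2 * ((m:ℝ) + 1)))) * qGammaInv q (ν + ((m:ℝ)+1) + 1)) := by
        rw [he]; ring
    _ = (q ^ (-e) * q ^ ((2-d) * ((m:ℝ)+1) * (ν + ((m:ℝ)+1)))) * (1 - q ^ 2) ^ (m+1) * (z/2) ^ e
          / qPoch (q ^ 2) (q ^ 2) m
          * ((1 - q ^ (2 * (ν + (m:ℝ) + 1))) * qGammaInv q (ν + ((m:ℝ)+1) + 1)) := by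
        rw [hBr]; field_simp
    _ = (q ^ (-d) * (q ^ ((1 - d) * (ν + 2 * (m:ℝ))) * q ^ ((2 - d) * (m:ℝ) * (ν + (m:ℝ)))))
          * (1 - q ^ 2) ^ (m+1) * ((z/2) ^ (ν + 2 * (m:ℝ)) * (z/2) ^ 2)
          / qPoch (q ^ 2) (q ^ 2) m
          * ((1 - q ^ 2) * qGammaInv q (ν + (m:ℝ) + 1)) := by
        rw [hG, hA, hS]
    _ = q ^ (-d) * ((1 - q ^ 2) ^ 2 / 4) * z ^ 2
          * (q ^ ((2-d) * (m:ℝ) * (ν + (m:ℝ))) * (1 - q ^ 2) ^ m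
            * (q ^ ((1 - d) * (ν + 2 * (m:ℝ))) * (z/2) ^ (ν + 2 * (m:ℝ)))
            / qPoch (q ^ 2) (q ^ 2) m * qGammaInv q (ν + (m:ℝ) + 1)) := by
        field_simp; ring

/-- the modified q-Bessel functions satisfy the second-order q-difference
equation `f(q⁻¹z) - (q^{-ν}+q^ν) f(z) + f(qz) = q^{-δ} ((1-q²)²/4) z² f(q^{1-δ} z)`. -/
theorem stmt0 (q ν : ℝ) (hq0 : 0 < q) (hq1 : q < 1)
    (j : ℕ) (hj : j = 1 ∨ j = 2 ∨ j = 3)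
    (z : ℝ) (hz : 0 < z) (hz1 : j = 1 → z < 2 * q / (1 - q ^ 2)) :
    Iq q j ν (q⁻¹ * z) - (q ^ (-ν) + q ^ ν) * Iq q j ν z + Iq q j ν (q * z)
      = q ^ (-delta j) * ((1 - q ^ 2) ^ 2 / 4) * z ^ 2
          * Iq q j ν (q ^ (1 - delta j) * z) := by
  have hq2' : q ^ 2 < 1 := by nlinarith
  have h12 : (0:ℝ) < 1 - q ^ 2 := by linarith
  have hIq : ∀ w, Iq q j ν w = ∑' k, qterm q (2 - delta j) ν w k := fun w => rfl
  have hc : 0 ≤ 2 - delta j := by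
    rcases hj with rfl | rfl | rfl <;> simp [delta] <;> norm_num
  have hkey : 2 - delta j = 0 → (1 - q ^ 2) * z < 2 * q := by
    intro h0
    rcases hj with rfl | rfl | rfl
    · have h := (lt_div_iff₀ h12).mp (hz1 rfl)
      linarith
    · simp [delta] at h0
    · simp [delta] at h0; norm_num at h0
  have hW1 : 2 - delta j = 0 → (1 - q ^ 2) * (q⁻¹ * z) < 2 := by
    intro h0
    have hk := hkey h0
    have h1 : ((1 - q ^ 2) * z) * q⁻¹ < (2 * q) * q⁻¹ :=
      mul_lt_mul_of_pos_right hk (by positivity)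
    have h2 : (2 * q) * q⁻¹ = 2 := by field_simp
    calc (1 - q ^ 2) * (q⁻¹ * z) = ((1 - q ^ 2) * z) * q⁻¹ := by ring
      _ < 2 := by rw [← h2]; exact h1
  have S1 : Summable (qterm q (2 - delta j) ν (q⁻¹ * z)) :=
    summable_qterm hq0 hq1 hc (by positivity) hW1
  have S2 : Summable (qterm q (2 - delta j) ν z) :=
    summable_qterm hq0 hq1 hc hz (fun h0 => by nlinarith [hkey h0])
  have S3 : Summable (qterm q (2 - delta j) ν (q * z)) :=
    summable_qterm hq0 hq1 hc (by positivity) (fun h0 => by nlinarith [hkey h0])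
  have hrp : 0 < q ^ (1 - delta j) := Real.rpow_pos_of_pos hq0 _
  have S4 : Summable (qterm q (2 - delta j) ν (q ^ (1 - delta j) * z)) := by
    apply summable_qterm hq0 hq1 hc (by positivity)
    intro h0
    have hd2 : delta j = 2 := by linarith
    have he : q ^ (1 - delta j) = q⁻¹ := by
      rw [hd2, show (1:ℝ) - 2 = -1 by norm_num, Real.rpow_neg_one]
    rw [he]
    exact hW1 h0
  have ht0 : ∀ w : ℝ, qterm q (2 - delta j) ν w 0 = (w / 2) ^ ν * qGammaInv q (ν + 1) := by
    intro w
    unfold qterm qPoch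
    norm_num
  have hzero : qterm q (2 - delta j) ν (q⁻¹ * z) 0
      - (q ^ (-ν) + q ^ ν) * qterm q (2 - delta j) ν z 0
      + qterm q (2 - delta j) ν (q * z) 0 = 0 := by
    rw [ht0, ht0, ht0]
    have e1 : (q⁻¹ * z / 2) ^ ν = q ^ (-ν) * (z / 2) ^ ν := by
      rw [show q⁻¹ * z / 2 = q⁻¹ * (z / 2) by ring,
        Real.mul_rpow (by positivity) (by positivity), Real.inv_rpow hq0.le,
        ← Real.rpow_neg hq0.le]
    have e2 : (q * z / 2) ^ ν = q ^ ν * (z / 2) ^ ν := by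
      rw [show q * z / 2 = q * (z / 2) by ring, Real.mul_rpow hq0.le (by positivity)]
    rw [e1, e2]
    ring
  rw [hIq, hIq, hIq, hIq, ← tsum_mul_left, ← Summable.tsum_sub S1 (S2.mul_left _),
    ← Summable.tsum_add ((S1.sub (S2.mul_left _))) S3, ← tsum_mul_left,
    Summable.tsum_eq_zero_add (((S1.sub (S2.mul_left _))).add S3)]
  rw [hzero, zero_add]
  exact tsum_congr fun m => qterm_step hq0 hq1 hz m

end
end

section
/- For each j ∈ {1,2,3}, if ν ∈ ℝ is not an integer (the real form of the condition ν ≠ k + iπm/ln q), then for every real z > 0 with z ≠ 2q^{-r}/(1-q²) for all integers r ≥ 0 (for j = 1 restricted to 0 < z < 2/(1-q²), where this exclusion is automatic), the q-Wronskian W(I_ν^{(j)}, I_{-ν}^{(j)})(z) of the functions z ↦ I_ν^{(j)}((1-q²)z;q²) and z ↦ I_{-ν}^{(j)}((1-q²)z;q²) is nonzero; hence these two functions form a fundamental system of solutions of the q-difference equation f(q⁻¹z) - (q^{-ν}+q^{ν})f(z) + f(qz) = q^{-δ(j)}((1-q²)²/4) z² f(q^{1-δ(j)}z). -/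
open Real Filter Topology

set_option maxHeartbeats 1600000

noncomputable section

/-- q-Wronskian `W(f,g)(z) = f(z) g(qz) - f(qz) g(z)`. -/
def qWron (q : ℝ) (f g : ℝ → ℝ) (z : ℝ) : ℝ := f z * g (q * z) - f (q * z) * g z

/-! ### Auxiliary infrastructure -/

lemma abs_log_one_sub_le {t : ℝ} (h0 : 0 ≤ t) (h1 : t ≤ 1/2) : |Real.log (1 - t)| ≤ 2 * t := by
  have h2 : (0:ℝ) < 1 - t := by linarith
  have hlog : Real.log (1 - t) ≤ 0 := Real.log_nonpos (by linarith) (by linarith)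
  rw [abs_of_nonpos hlog]
  have h3 := Real.log_le_sub_one_of_pos (inv_pos.2 h2)
  rw [Real.log_inv] at h3
  have h4 : (1 - t)⁻¹ ≤ 1 + 2 * t := by
    rw [inv_le_iff_one_le_mul₀ h2]
    nlinarith
  linarith

variable {Q : ℝ}

lemma hasProd_tail (hQ0 : 0 < Q) (hQ1 : Q < 1) {a : ℝ} (ha0 : 0 ≤ a)
    (hsmall : ∀ n : ℕ, a * Q ^ n ≤ 1/2) :
    HasProd (fun n : ℕ => 1 - a * Q ^ n)
      (Real.exp (∑' n : ℕ, Real.log (1 - a * Q ^ n))) := by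
  have hpos : ∀ n : ℕ, 0 < 1 - a * Q ^ n := fun n => by
    have := hsmall n; linarith
  have hsum : Summable fun n : ℕ => Real.log (1 - a * Q ^ n) := by
    have hg : Summable (fun n : ℕ => 2 * (a * Q ^ n)) :=
      (((summable_geometric_of_lt_one hQ0.le hQ1).mul_left a).mul_left 2)
    exact Summable.of_abs (hg.of_nonneg_of_le (fun n => abs_nonneg _)
      (fun n => abs_log_one_sub_le (mul_nonneg ha0 (pow_nonneg hQ0.le n)) (hsmall n)))
  have he : (fun n : ℕ => 1 - a * Q ^ n)
      = rexp ∘ (fun n : ℕ => Real.log (1 - a * Q ^ n)) :=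
    funext fun n => (Real.exp_log (hpos n)).symm
  rw [he]
  exact hsum.hasSum.rexp

lemma exists_tail_small (hQ0 : 0 < Q) (hQ1 : Q < 1) (a : ℝ) :
    ∃ N : ℕ, ∀ n : ℕ, a * Q ^ (n + N) ≤ 1/2 := by
  have h : Tendsto (fun n : ℕ => a * Q ^ n) atTop (𝓝 0) := by
    simpa using (tendsto_pow_atTop_nhds_zero_of_lt_one (by linarith) hQ1).const_mul a
  obtain ⟨N, hN⟩ := eventually_atTop.1 (h.eventually_le_const (by norm_num : (0:ℝ) < 1/2))
  exact ⟨N, fun n => hN (n + N) (Nat.le_add_left N n)⟩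

lemma hasProd_tail' (hQ0 : 0 < Q) (hQ1 : Q < 1) {a : ℝ} (ha0 : 0 ≤ a) {N : ℕ}
    (hN : ∀ n : ℕ, a * Q ^ (n + N) ≤ 1/2) :
    HasProd (fun n : ℕ => 1 - a * Q ^ (n + N))
      (Real.exp (∑' n : ℕ, Real.log (1 - (a * Q ^ N) * Q ^ n))) := by
  have he : (fun n : ℕ => 1 - a * Q ^ (n + N)) = (fun n : ℕ => 1 - (a * Q ^ N) * Q ^ n) :=
    funext fun n => by rw [pow_add]; ring
  rw [he]
  exact hasProd_tail hQ0 hQ1 (mul_nonneg ha0 (pow_nonneg hQ0.le N))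
    (fun n => by rw [show a * Q ^ N * Q ^ n = a * Q ^ (n + N) by rw [pow_add]; ring]
                 exact hN n)

lemma multipliable_poch (hQ0 : 0 < Q) (hQ1 : Q < 1) {a : ℝ} (ha0 : 0 ≤ a) :
    Multipliable (fun n : ℕ => 1 - a * Q ^ n) := by
  obtain ⟨N, hN⟩ := exists_tail_small hQ0 hQ1 a
  exact (hasProd_tail' hQ0 hQ1 ha0 hN).prod_range_mul.multipliable

lemma qPochInf_ne_zero' (hQ0 : 0 < Q) (hQ1 : Q < 1) {a : ℝ} (ha0 : 0 ≤ a)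
    (hne : ∀ n : ℕ, a * Q ^ n ≠ 1) : (∏' n : ℕ, (1 - a * Q ^ n)) ≠ 0 := by
  obtain ⟨N, hN⟩ := exists_tail_small hQ0 hQ1 a
  rw [← Multipliable.prod_mul_tprod_nat_mul' (hasProd_tail' hQ0 hQ1 ha0 hN).multipliable]
  apply mul_ne_zero
  · rw [Finset.prod_ne_zero_iff]
    exact fun i _ => sub_ne_zero.2 (Ne.symm (hne i))
  · rw [(hasProd_tail' hQ0 hQ1 ha0 hN).tprod_eq]
    exact (Real.exp_pos _).ne'

lemma qPochInf_shift' (hQ0 : 0 < Q) (hQ1 : Q < 1) {a : ℝ} (ha0 : 0 ≤ a) :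
    (∏' n : ℕ, (1 - a * Q ^ n)) = (1 - a) * ∏' n : ℕ, (1 - (a * Q) * Q ^ n) := by
  have hm : Multipliable (fun n : ℕ => 1 - a * Q ^ (n + 1)) := by
    have := multipliable_poch hQ0 hQ1 (a := a * Q) (mul_nonneg ha0 hQ0.le)
    exact this.congr fun n => by rw [pow_succ]; ring
  rw [tprod_eq_zero_mul' hm]
  simp only [pow_zero, mul_one]
  congr 1
  exact tprod_congr fun n => by rw [pow_succ]; ring

section Main

variable {q : ℝ}

lemma q2pow (hq0 : 0 < q) (n : ℕ) : ((q^2)^n : ℝ) = q ^ (2*(n:ℝ)) := by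
  rw [show (2*(n:ℝ)) = ((2*n:ℕ):ℝ) by push_cast; ring, Real.rpow_natCast, pow_mul]

lemma rpow_merge (hq0 : 0 < q) (t : ℝ) (n : ℕ) :
    q ^ t * ((q^2)^n : ℝ) = q ^ (t + 2*(n:ℝ)) := by
  rw [q2pow hq0, ← Real.rpow_add hq0]

lemma rpow_eq_one_iff' (hq0 : 0 < q) (hq1 : q < 1) {t : ℝ} : q ^ t = 1 ↔ t = 0 := by
  rw [Real.rpow_def_of_pos hq0, Real.exp_eq_one_iff, mul_eq_zero]
  have : Real.log q ≠ 0 := ne_of_lt (Real.log_neg hq0 hq1)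
  simp [this]

lemma qPoch_ne_zero (hq0 : 0 < q) (hq1 : q < 1) (k : ℕ) : qPoch (q^2) (q^2) k ≠ 0 := by
  have h21 : q^2 < 1 := by nlinarith
  rw [qPoch, Finset.prod_ne_zero_iff]
  intro i _
  have : (q^2) * (q^2)^i = (q^2)^(i+1) := by ring
  have hlt : (q^2) * (q^2)^i < 1 := by
    rw [this]; exact pow_lt_one₀ (by positivity) h21 (Nat.succ_ne_zero i)
  exact sub_ne_zero.2 (Ne.symm (ne_of_lt hlt))

lemma gamma_rec (hq0 : 0 < q) (hq1 : q < 1) (x : ℝ) :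
    qGammaInv q (x + 1) * (1 - q ^ (2*x)) = (1 - q ^ 2) * qGammaInv q x := by
  have h20 : (0:ℝ) < q^2 := by positivity
  have h21 : q^2 < 1 := by nlinarith
  have hx0 : (0:ℝ) ≤ q^(2*x) := (Real.rpow_pos_of_pos hq0 _).le
  have key : qPochInf (q^(2*x)) (q^2) = (1 - q^(2*x)) * qPochInf (q^(2*(x+1))) (q^2) := by
    unfold qPochInf
    rw [qPochInf_shift' h20 h21 hx0]
    congr 1
    refine tprod_congr fun n => ?_
    rw [show q^(2*x) * q^2 = q^(2*(x+1)) by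
      rw [← Real.rpow_natCast q 2, ← Real.rpow_add hq0]; norm_num; ring_nf]
  unfold qGammaInv
  rw [key, show x + 1 - 1 = (x - 1) + 1 by ring,
    Real.rpow_add (by nlinarith : (0:ℝ) < 1 - q^2), Real.rpow_one]
  ring

lemma gammaInv_ne_zero (hq0 : 0 < q) (hq1 : q < 1) {x : ℝ} (hx : ∀ n : ℕ, x + n ≠ 0) :
    qGammaInv q x ≠ 0 := by
  have h20 : (0:ℝ) < q^2 := by positivity
  have h21 : q^2 < 1 := by nlinarith
  have hC : qPochInf (q^2) (q^2) ≠ 0 := by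
    refine qPochInf_ne_zero' h20 h21 h20.le fun n => ?_
    have : (q^2) * (q^2)^n = (q^2)^(n+1) := by ring
    rw [this]
    exact ne_of_lt (pow_lt_one₀ (by positivity) h21 (Nat.succ_ne_zero n))
  have hA : qPochInf (q^(2*x)) (q^2) ≠ 0 := by
    refine qPochInf_ne_zero' h20 h21 (Real.rpow_pos_of_pos hq0 _).le fun n => ?_
    rw [rpow_merge hq0, Ne, rpow_eq_one_iff' hq0 hq1]
    intro h
    exact hx n (by linarith)
  have hB : (1 - q^2 : ℝ) ^ (x - 1) ≠ 0 := (Real.rpow_pos_of_pos (by nlinarith) _).ne'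
  exact div_ne_zero (mul_ne_zero hA hB) hC

end Main

def bterm (q : ℝ) (j : ℕ) (μ z : ℝ) (k : ℕ) : ℝ :=
  q ^ ((2 - delta j) * k * (μ + k)) * (1 - q ^ 2) ^ k * (z / 2) ^ (μ + 2 * k)
      / qPoch (q ^ 2) (q ^ 2) k * qGammaInv q (μ + k + 1)

lemma Iq_eq (q : ℝ) (j : ℕ) (μ z : ℝ) : Iq q j μ z = ∑' k : ℕ, bterm q j μ z k := rfl

section BTerm

variable {q : ℝ} {j : ℕ} {μ z : ℝ}

lemma hμ_nat {μ : ℝ} (hμ : ∀ n : ℤ, μ ≠ n) (k : ℕ) : ∀ n : ℕ, (μ + k + 1) + n ≠ 0 := by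
  intro n h
  apply hμ (-(k + n + 1))
  push_cast
  linarith

lemma gk_ne_zero (hq0 : 0 < q) (hq1 : q < 1) (hμ : ∀ n : ℤ, μ ≠ n) (k : ℕ) :
    (1 : ℝ) - q ^ (2*(μ + (k:ℝ) + 1)) ≠ 0 := by
  rw [sub_ne_zero]
  intro h
  rw [eq_comm, rpow_eq_one_iff' hq0 hq1] at h
  exact hμ_nat hμ k 0 (by push_cast; linarith)

lemma bterm_scale (hq0 : 0 < q) {c : ℝ} (hc : 0 < c) (hz : 0 < z) (j : ℕ) (μ : ℝ) (k : ℕ) :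
    bterm q j μ (c * z) k = c ^ (μ + 2 * (k:ℝ)) * bterm q j μ z k := by
  unfold bterm
  rw [show c * z / 2 = c * (z/2) by ring, Real.mul_rpow hc.le (by positivity)]
  ring

lemma bterm_ne_zero (hq0 : 0 < q) (hq1 : q < 1) (hμ : ∀ n : ℤ, μ ≠ n) (hz : 0 < z) (k : ℕ) :
    bterm q j μ z k ≠ 0 := by
  unfold bterm
  have h1 : q ^ ((2 - delta j) * k * (μ + k)) ≠ 0 := (Real.rpow_pos_of_pos hq0 _).ne'
  have h2 : ((1:ℝ) - q ^ 2) ^ k ≠ 0 := pow_ne_zero _ (by nlinarith)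
  have h3 : (z / 2 : ℝ) ^ (μ + 2 * (k:ℝ)) ≠ 0 := (Real.rpow_pos_of_pos (by linarith) _).ne'
  have h5 : qGammaInv q (μ + k + 1) ≠ 0 := gammaInv_ne_zero hq0 hq1 (hμ_nat hμ k)
  exact mul_ne_zero (div_ne_zero (mul_ne_zero (mul_ne_zero h1 h2) h3)
    (qPoch_ne_zero hq0 hq1 k)) h5

lemma bterm_rec (hq0 : 0 < q) (hq1 : q < 1) (hμ : ∀ n : ℤ, μ ≠ n) (hz : 0 < z) (k : ℕ) :
    bterm q j μ z (k+1) * ((1 - q ^ (2*((k:ℝ)+1))) * (1 - q ^ (2*μ + 2*((k:ℝ)+1)))) =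
      q ^ (-(delta j)) * ((1 - q ^ 2)^2/4) * q ^ 2 * z ^ 2
        * q ^ ((2 - delta j) * (μ + 2*(k:ℝ))) * bterm q j μ z k := by
  have hq2 : (0:ℝ) < 1 - q^2 := by nlinarith
  have hpk : (1:ℝ) - q ^ (2*((k:ℝ)+1)) ≠ 0 := by
    rw [sub_ne_zero]
    intro h
    rw [eq_comm, rpow_eq_one_iff' hq0 hq1] at h
    have : (k:ℝ) ≥ 0 := Nat.cast_nonneg k
    linarith
  have hgk : (1:ℝ) - q ^ (2*(μ + (k:ℝ) + 1)) ≠ 0 := gk_ne_zero hq0 hq1 hμ k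
  have e1 : q ^ ((2 - delta j) * (((k:ℝ))+1) * (μ + (((k:ℝ))+1)))
      = q ^ ((2 - delta j) * k * (μ + k)) * q ^ ((2 - delta j) * (μ + 2*(k:ℝ) + 1)) := by
    rw [← Real.rpow_add hq0]; congr 1; ring
  have e2 : (z/2 : ℝ) ^ (μ + 2*((k:ℝ)+1)) = (z/2) ^ (μ + 2*(k:ℝ)) * (z/2) ^ (2:ℝ) := by
    rw [← Real.rpow_add (by positivity)]; congr 1; ring
  have e3 : (z/2 : ℝ) ^ (2:ℝ) = z^2/4 := by
    rw [show (2:ℝ) = ((2:ℕ):ℝ) by norm_num, Real.rpow_natCast]; ring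
  have e4 : qPoch (q^2) (q^2) (k+1) = qPoch (q^2) (q^2) k * (1 - q^(2*((k:ℝ)+1))) := by
    rw [qPoch, Finset.prod_range_succ, ← qPoch]
    congr 1
    rw [show (2*((k:ℝ)+1)) = 2*(((k+1:ℕ)):ℝ) by push_cast; ring, ← q2pow hq0 (k+1)]
    ring
  have e5 : qGammaInv q (μ + ((k:ℝ)+1) + 1)
      = (1 - q^2) * qGammaInv q (μ + (k:ℝ) + 1) / (1 - q ^ (2*(μ + (k:ℝ) + 1))) := by
    rw [eq_div_iff hgk, show μ + ((k:ℝ)+1) + 1 = (μ + (k:ℝ) + 1) + 1 by ring]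
    exact gamma_rec hq0 hq1 (μ + (k:ℝ) + 1)
  have e6 : q ^ (-(delta j)) * q ^ 2 * q ^ ((2 - delta j) * (μ + 2*(k:ℝ)))
      = q ^ ((2 - delta j) * (μ + 2*(k:ℝ) + 1)) := by
    rw [← Real.rpow_natCast q 2, ← Real.rpow_add hq0, ← Real.rpow_add hq0]
    congr 1
    push_cast
    ring
  unfold bterm
  push_cast
  rw [e1, e2, e3, e4, e5, ← e6,
    show 2*μ + 2*((k:ℝ)+1) = 2*(μ + (k:ℝ) + 1) by ring]
  field_simp [qPoch_ne_zero hq0 hq1 k, hpk, hgk]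
  ring

end BTerm

section Summab

variable {q : ℝ} {j : ℕ} {μ z : ℝ}

lemma tendsto_rpow_shift (hq0 : 0 < q) (hq1 : q < 1) (t : ℝ) :
    Filter.Tendsto (fun k : ℕ => q ^ (t + 2*(k:ℝ))) Filter.atTop (nhds 0) := by
  have he : ∀ k : ℕ, q ^ (t + 2*(k:ℝ)) = q ^ t * ((q^2)^k : ℝ) :=
    fun k => (rpow_merge hq0 t k).symm
  have h2 : (q:ℝ)^2 < 1 := by nlinarith
  have := (tendsto_pow_atTop_nhds_zero_of_lt_one (by positivity : (0:ℝ) ≤ q^2) h2).const_mul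
    (q ^ t)
  simpa [← he] using this

lemma bterm_abs_summable (hq0 : 0 < q) (hq1 : q < 1) (hμ : ∀ n : ℤ, μ ≠ n) (hz : 0 < z)
    (hj : j = 1 ∨ j = 2 ∨ j = 3) (hz1 : j = 1 → z < 2 / (1 - q ^ 2)) :
    Summable (fun k => |bterm q j μ z k|) := by
  have hq2 : (0:ℝ) < 1 - q^2 := by nlinarith
  set N : ℕ → ℝ := fun k =>
    q ^ (-(delta j)) * ((1 - q ^ 2)^2/4) * q ^ 2 * z ^ 2
      * q ^ ((2 - delta j) * (μ + 2*(k:ℝ))) with hN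
  set D : ℕ → ℝ := fun k =>
    (1 - q ^ (2*((k:ℝ)+1))) * (1 - q ^ (2*μ + 2*((k:ℝ)+1))) with hD
  have hDk : ∀ k : ℕ, D k ≠ 0 := by
    intro k
    apply mul_ne_zero
    · rw [sub_ne_zero]
      intro h
      rw [eq_comm, rpow_eq_one_iff' hq0 hq1] at h
      have : (0:ℝ) ≤ (k:ℝ) := Nat.cast_nonneg k
      linarith
    · rw [show 2*μ + 2*((k:ℝ)+1) = 2*(μ + (k:ℝ) + 1) by ring]
      exact gk_ne_zero hq0 hq1 hμ k
  have hrec : ∀ k : ℕ, bterm q j μ z (k+1) = (N k / D k) * bterm q j μ z k := by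
    intro k
    rw [div_mul_eq_mul_div, eq_div_iff (hDk k)]
    linear_combination bterm_rec hq0 hq1 hμ hz k
  -- limit of the ratio
  have hA : Filter.Tendsto (fun k : ℕ => q ^ ((2 - delta j) * (μ + 2*(k:ℝ))))
      Filter.atTop (nhds (if j = 1 then 1 else 0)) := by
    rcases hj with h | h | h
    · subst h
      simp only [if_pos rfl]
      have : ∀ k : ℕ, q ^ ((2 - delta 1) * (μ + 2*(k:ℝ))) = 1 := by
        intro k
        norm_num [delta]
      simpa [this] using tendsto_const_nhds (x := (1:ℝ)) (f := Filter.atTop (α := ℕ))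
    · subst h
      simp only [show (2:ℕ) ≠ 1 by norm_num, if_neg]
      have he : ∀ k : ℕ, q ^ ((2 - delta 2) * (μ + 2*(k:ℝ))) = q ^ (2*μ + 4*(k:ℝ)) := by
        intro k; norm_num [delta]; ring_nf
      have h4 : ∀ k : ℕ, q ^ (2*μ + 4*(k:ℝ)) = q ^ (2*μ) * ((q^4 : ℝ))^k := by
        intro k
        rw [← Real.rpow_natCast q 4, ← Real.rpow_natCast (q ^ ((4:ℕ):ℝ)) k,
          ← Real.rpow_mul hq0.le, ← Real.rpow_add hq0]
        norm_num
      have h41 : (q:ℝ)^4 < 1 := by nlinarith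
      have := (tendsto_pow_atTop_nhds_zero_of_lt_one (by positivity : (0:ℝ) ≤ q^4)
        h41).const_mul (q ^ (2*μ))
      simp only [mul_zero] at this
      refine Filter.Tendsto.congr (fun k => ?_) this
      rw [← h4, he]
    · subst h
      simp only [show (3:ℕ) ≠ 1 by norm_num, if_neg]
      have he : ∀ k : ℕ, q ^ ((2 - delta 3) * (μ + 2*(k:ℝ))) = q ^ (μ + 2*(k:ℝ)) := by
        intro k; norm_num [delta]
      have := tendsto_rpow_shift hq0 hq1 μ
      refine Filter.Tendsto.congr (fun k => ?_) (by simpa using this)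
      rw [he]
  have hDlim : Filter.Tendsto D Filter.atTop (nhds 1) := by
    have h1 : Filter.Tendsto (fun k : ℕ => 1 - q ^ (2*((k:ℝ)+1))) Filter.atTop (nhds 1) := by
      have := (tendsto_rpow_shift hq0 hq1 2).const_sub 1
      simp only [sub_zero] at this
      refine Filter.Tendsto.congr (fun k => ?_) this
      congr 1; ring_nf
    have h2 : Filter.Tendsto (fun k : ℕ => 1 - q ^ (2*μ + 2*((k:ℝ)+1)))
        Filter.atTop (nhds 1) := by
      have := (tendsto_rpow_shift hq0 hq1 (2*μ+2)).const_sub 1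
      simp only [sub_zero] at this
      refine Filter.Tendsto.congr (fun k => ?_) this
      congr 1; ring_nf
    have := h1.mul h2
    simpa using this
  set L : ℝ := q ^ (-(delta j)) * ((1 - q ^ 2)^2/4) * q ^ 2 * z ^ 2
      * (if j = 1 then (1:ℝ) else 0) with hLdef
  have hρ : Filter.Tendsto (fun k => N k / D k) Filter.atTop (nhds L) := by
    have hNt : Filter.Tendsto N Filter.atTop (nhds L) := by
      exact (tendsto_const_nhds.mul hA)
    have h := hNt.div hDlim one_ne_zero
    rw [div_one] at h
    exact h
  have hL1 : |L| < 1 := by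
    rcases hj with h | h | h
    · subst h
      have hzb := hz1 rfl
      have hq2' : q ^ (-(delta 1)) * q^2 = 1 := by
        show q ^ (-(2:ℝ)) * q^2 = 1
        rw [← Real.rpow_natCast q 2, ← Real.rpow_add hq0]
        norm_num
      have hLval : L = (1 - q^2)^2/4 * z^2 := by
        rw [hLdef, if_pos rfl]
        linear_combination ((1 - q^2)^2/4 * z^2) * hq2'
      rw [hLval, abs_of_nonneg (by positivity)]
      have h3 : z * (1 - q^2) < 2 := (lt_div_iff₀ hq2).mp hzb
      have h4 : (z*(1-q^2))*(z*(1-q^2)) < 4 := by nlinarith [mul_pos hz hq2]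
      nlinarith [h4]
    · subst h; norm_num [hLdef]
    · subst h; norm_num [hLdef]
  set r : ℝ := (|L| + 1)/2 with hr
  have hr1 : r < 1 := by rw [hr]; linarith
  have hev : ∀ᶠ k in Filter.atTop, |N k / D k| ≤ r := by
    have := (hρ.abs).eventually_le_const (show |L| < r by rw [hr]; linarith)
    exact this
  apply summable_of_ratio_norm_eventually_le hr1
  filter_upwards [hev] with k hk
  rw [Real.norm_eq_abs, Real.norm_eq_abs, abs_abs, abs_abs, hrec k, abs_mul]
  exact mul_le_mul_of_nonneg_right hk (abs_nonneg _)

end Summab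

section QDiff

variable {q : ℝ} {j : ℕ} {μ z : ℝ}

lemma scalar_id (hq0 : 0 < q) (μ : ℝ) (k : ℕ) :
    1 - (q^(-μ) + q^μ) * q^(μ + 2*(k:ℝ)) + ((q^2:ℝ))^(μ+2*(k:ℝ))
      = (1 - q^(2*(k:ℝ))) * (1 - q^(2*μ + 2*(k:ℝ))) := by
  have h1 : q^(-μ) * q^(μ+2*(k:ℝ)) = q^(2*(k:ℝ)) := by
    rw [← Real.rpow_add hq0]; congr 1; ring
  have h2 : q^μ * q^(μ+2*(k:ℝ)) = q^(2*μ+2*(k:ℝ)) := by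
    rw [← Real.rpow_add hq0]; congr 1; ring
  have h3 : ((q^2:ℝ))^(μ+2*(k:ℝ)) = q^(2*(k:ℝ)) * q^(2*μ+2*(k:ℝ)) := by
    rw [← Real.rpow_natCast q 2, ← Real.rpow_mul hq0.le, ← Real.rpow_add hq0]
    congr 1; push_cast; ring
  linear_combination (-1 : ℝ)*h1 + (-1:ℝ)*h2 + h3

lemma qdiff (hq0 : 0 < q) (hq1 : q < 1) (hμ : ∀ n : ℤ, μ ≠ n) (hz : 0 < z)
    (hj : j = 1 ∨ j = 2 ∨ j = 3) (hz1 : j = 1 → z < 2 / (1 - q ^ 2)) :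
    Iq q j μ z = (q ^ (-μ) + q ^ μ) * Iq q j μ (q * z) - Iq q j μ (q ^ 2 * z)
      + (q ^ (-(delta j)) * ((1 - q ^ 2)^2/4)) * (q ^ 2 * z ^ 2)
          * Iq q j μ (q ^ ((2:ℝ) - delta j) * z) := by
  have hq2 : (0:ℝ) < 1 - q^2 := by nlinarith
  have hzq : 0 < q * z := by positivity
  have hzq2 : 0 < q^2 * z := by positivity
  have hc3 : (0:ℝ) < q ^ ((2:ℝ) - delta j) := Real.rpow_pos_of_pos hq0 _
  have hzc3 : 0 < q ^ ((2:ℝ) - delta j) * z := by positivity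
  have hqle : q * z ≤ z := by nlinarith
  have hq2le : q^2 * z ≤ z := by nlinarith
  have hc3e : j = 1 → q ^ ((2:ℝ) - delta j) = 1 := by
    intro h; subst h
    rw [show (2:ℝ) - delta 1 = 0 by norm_num [delta], Real.rpow_zero]
  -- summabilities
  have S1 : Summable (fun k => bterm q j μ z k) :=
    (bterm_abs_summable hq0 hq1 hμ hz hj hz1).of_abs
  have S1abs := bterm_abs_summable hq0 hq1 hμ hz hj hz1
  have Sqz : Summable (fun k => bterm q j μ (q * z) k) :=
    (bterm_abs_summable hq0 hq1 hμ hzq hj (fun h => lt_of_le_of_lt hqle (hz1 h))).of_abs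
  have Sq2z : Summable (fun k => bterm q j μ (q^2 * z) k) :=
    (bterm_abs_summable hq0 hq1 hμ hzq2 hj (fun h => lt_of_le_of_lt hq2le (hz1 h))).of_abs
  have Sc3z : Summable (fun k => bterm q j μ (q ^ ((2:ℝ) - delta j) * z) k) :=
    (bterm_abs_summable hq0 hq1 hμ hzc3 hj
      (fun h => by rw [hc3e h, one_mul]; exact hz1 h)).of_abs
  -- scaled term identities
  have tqz : ∀ k : ℕ, bterm q j μ (q * z) k = q^(μ + 2*(k:ℝ)) * bterm q j μ z k :=
    fun k => bterm_scale hq0 hq0 hz j μ k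
  have tq2z : ∀ k : ℕ, bterm q j μ (q^2 * z) k = ((q^2:ℝ))^(μ + 2*(k:ℝ)) * bterm q j μ z k :=
    fun k => bterm_scale hq0 (by positivity) hz j μ k
  have tc3z : ∀ k : ℕ, bterm q j μ (q ^ ((2:ℝ) - delta j) * z) k
      = q^(((2:ℝ) - delta j) * (μ + 2*(k:ℝ))) * bterm q j μ z k := by
    intro k
    rw [bterm_scale hq0 hc3 hz j μ k, Real.rpow_mul hq0.le]
  have S2 : Summable (fun k : ℕ => q^(μ + 2*(k:ℝ)) * bterm q j μ z k) := Sqz.congr tqz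
  have S3 : Summable (fun k : ℕ => ((q^2:ℝ))^(μ + 2*(k:ℝ)) * bterm q j μ z k) := Sq2z.congr tq2z
  set D : ℕ → ℝ := fun k =>
    bterm q j μ z k * ((1 - q^(2*(k:ℝ))) * (1 - q^(2*μ + 2*(k:ℝ)))) with hDdef
  have SD : Summable D := by
    apply Summable.of_abs
    refine Summable.of_nonneg_of_le (fun k => abs_nonneg _) (fun k => ?_)
      (S1abs.mul_right (1 + q^(2*μ)))
    · rw [hDdef, abs_mul]
      apply mul_le_mul_of_nonneg_left _ (abs_nonneg _)
      rw [abs_mul]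
      have hk1 : (0:ℝ) ≤ q^(2*(k:ℝ)) := (Real.rpow_pos_of_pos hq0 _).le
      have hk2 : q^(2*(k:ℝ)) ≤ 1 :=
        Real.rpow_le_one hq0.le hq1.le (by positivity)
      have hk3 : (0:ℝ) ≤ q^(2*μ + 2*(k:ℝ)) := (Real.rpow_pos_of_pos hq0 _).le
      have hk4 : q^(2*μ + 2*(k:ℝ)) ≤ q^(2*μ) := by
        rw [Real.rpow_add hq0]
        nlinarith [Real.rpow_pos_of_pos hq0 (2*μ)]
      have b1 : |1 - q^(2*(k:ℝ))| ≤ 1 := abs_le.2 ⟨by linarith, by linarith⟩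
      have b2 : |1 - q^(2*μ + 2*(k:ℝ))| ≤ 1 + q^(2*μ) := abs_le.2 ⟨by linarith, by linarith⟩
      calc |1 - q^(2*(k:ℝ))| * |1 - q^(2*μ + 2*(k:ℝ))|
          ≤ 1 * (1 + q^(2*μ)) := by
            apply mul_le_mul b1 b2 (abs_nonneg _) (by norm_num)
        _ = 1 + q^(2*μ) := by ring
  have lhs_eq : Iq q j μ z - (q ^ (-μ) + q ^ μ) * Iq q j μ (q * z) + Iq q j μ (q ^ 2 * z)
      = ∑' k, D k := by
    rw [Iq_eq, Iq_eq, Iq_eq, tsum_congr tqz, tsum_congr tq2z, ← tsum_mul_left,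
      ← Summable.tsum_sub S1 (S2.mul_left _), ← Summable.tsum_add ((S1.sub (S2.mul_left _))) S3]
    refine tsum_congr fun k => ?_
    rw [hDdef]
    linear_combination (bterm q j μ z k) * scalar_id hq0 μ k
  have rhs_eq : (q ^ (-(delta j)) * ((1 - q ^ 2)^2/4)) * (q ^ 2 * z ^ 2)
        * Iq q j μ (q ^ ((2:ℝ) - delta j) * z)
      = ∑' k : ℕ, ((q ^ (-(delta j)) * ((1 - q ^ 2)^2/4)) * (q ^ 2 * z ^ 2)
          * (q^(((2:ℝ) - delta j) * (μ + 2*(k:ℝ))) * bterm q j μ z k)) := by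
    rw [Iq_eq, tsum_congr tc3z, ← tsum_mul_left]
  have shift : ∑' k, D k = ∑' k, D (k+1) := by
    rw [Summable.tsum_eq_zero_add SD]
    have hD0 : D 0 = 0 := by
      rw [hDdef]
      norm_num
    rw [hD0, zero_add]
  have termwise : ∀ k : ℕ, D (k+1) = (q ^ (-(delta j)) * ((1 - q ^ 2)^2/4)) * (q ^ 2 * z ^ 2)
      * (q^(((2:ℝ) - delta j) * (μ + 2*(k:ℝ))) * bterm q j μ z k) := by
    intro k
    rw [hDdef]
    push_cast
    linear_combination bterm_rec hq0 hq1 hμ hz k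
  have key : Iq q j μ z - (q ^ (-μ) + q ^ μ) * Iq q j μ (q * z) + Iq q j μ (q ^ 2 * z)
      = (q ^ (-(delta j)) * ((1 - q ^ 2)^2/4)) * (q ^ 2 * z ^ 2)
          * Iq q j μ (q ^ ((2:ℝ) - delta j) * z) := by
    rw [lhs_eq, rhs_eq, shift]
    exact tsum_congr termwise
  linarith [key]

end QDiff

section WStep

variable {q ν : ℝ} {j : ℕ}

lemma hν_neg {ν : ℝ} (hν : ∀ n : ℤ, ν ≠ n) : ∀ n : ℤ, -ν ≠ n := by
  intro n h
  exact hν (-n) (by push_cast; linarith)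

lemma wstep (hq0 : 0 < q) (hq1 : q < 1) (hν : ∀ n : ℤ, ν ≠ n)
    (hj : j = 1 ∨ j = 2 ∨ j = 3) {w : ℝ} (hw : 0 < w) (hw1 : j = 1 → w < 2 / (1 - q ^ 2)) :
    (1 - (if j = 1 then (1 - q^2)^2/4 * w^2 else 0))
        * qWron q (fun u => Iq q j ν u) (fun u => Iq q j (-ν) u) w
      = (1 - (if j = 2 then (1 - q^2)^2/4 * q^2 * w^2 else 0))
        * qWron q (fun u => Iq q j ν u) (fun u => Iq q j (-ν) u) (q * w) := by
  have hν' := hν_neg hν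
  have hf := qdiff hq0 hq1 hν hw hj hw1
  have hg := qdiff hq0 hq1 hν' hw hj hw1
  rw [neg_neg] at hg
  have hq2w : q * (q * w) = q^2 * w := by ring
  rcases hj with h | h | h
  · subst h
    rw [if_pos rfl, if_neg (by norm_num : ¬ (1:ℕ) = 2)]
    rw [show ((2:ℝ) - delta 1) = 0 by norm_num [delta], Real.rpow_zero, one_mul] at hf hg
    have hc1 : q ^ (-(delta 1)) * q^2 = 1 := by
      rw [show -(delta 1) = -((2:ℕ):ℝ) by norm_num [delta], Real.rpow_neg hq0.le,
        Real.rpow_natCast]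
      field_simp
    rw [show (q ^ (-(delta 1)) * ((1 - q^2)^2/4)) * (q^2 * w^2) = (1 - q^2)^2/4 * w^2 by
      linear_combination ((1 - q^2)^2/4 * w^2) * hc1] at hf hg
    simp only [qWron, hq2w]
    linear_combination Iq q 1 (-ν) (q*w) * hf - Iq q 1 ν (q*w) * hg
  · subst h
    rw [if_neg (by norm_num : ¬ (2:ℕ) = 1), if_pos rfl]
    rw [show ((2:ℝ) - delta 2) = ((2:ℕ):ℝ) by norm_num [delta], Real.rpow_natCast] at hf hg
    rw [show q ^ (-(delta 2)) = 1 by norm_num [delta]] at hf hg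
    simp only [qWron, hq2w]
    linear_combination Iq q 2 (-ν) (q*w) * hf - Iq q 2 ν (q*w) * hg
  · subst h
    rw [if_neg (by norm_num : ¬ (3:ℕ) = 1), if_neg (by norm_num : ¬ (3:ℕ) = 2)]
    rw [show ((2:ℝ) - delta 3) = 1 by norm_num [delta], Real.rpow_one] at hf hg
    simp only [qWron, hq2w]
    linear_combination Iq q 3 (-ν) (q*w) * hf - Iq q 3 ν (q*w) * hg

end WStep

def sterm (q : ℝ) (j : ℕ) (μ w : ℝ) (k : ℕ) : ℝ :=
  q ^ ((2 - delta j) * k * (μ + k)) * (1 - q ^ 2) ^ k * ((w/2)^2) ^ k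
      / qPoch (q ^ 2) (q ^ 2) k * qGammaInv q (μ + k + 1)

section Limit

variable {q ν : ℝ} {j : ℕ} {μ z : ℝ}

lemma bterm_eq_sterm (hq0 : 0 < q) {w : ℝ} (hw : 0 < w) (k : ℕ) :
    bterm q j μ w k = (w/2) ^ μ * sterm q j μ w k := by
  unfold bterm sterm
  rw [show μ + 2*(k:ℝ) = μ + ((2*k : ℕ):ℝ) by push_cast; ring,
    Real.rpow_add (by positivity : (0:ℝ) < w/2), Real.rpow_natCast, pow_mul]
  ring

lemma Iq_eq_sterm (hq0 : 0 < q) {w : ℝ} (hw : 0 < w) :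
    Iq q j μ w = (w/2) ^ μ * ∑' k : ℕ, sterm q j μ w k := by
  rw [Iq_eq, ← tsum_mul_left]
  exact tsum_congr fun k => bterm_eq_sterm hq0 hw k

lemma sterm_zero (q : ℝ) (j : ℕ) (μ w : ℝ) : sterm q j μ w 0 = qGammaInv q (μ + 1) := by
  simp [sterm, qPoch]

lemma sterm_pow (q : ℝ) (j : ℕ) (μ z : ℝ) (n k : ℕ) :
    sterm q j μ (q^n * z) k = ((q^2)^k)^n * sterm q j μ z k := by
  unfold sterm
  rw [show (q^n * z/2)^2 = (q^2)^n * (z/2)^2 by ring, mul_pow,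
    show (((q^2:ℝ))^n)^k = ((q^2)^k)^n by ring]
  ring

lemma tendsto_sIq (hq0 : 0 < q) (hq1 : q < 1) (hμ : ∀ n : ℤ, μ ≠ n) (hz : 0 < z)
    (hj : j = 1 ∨ j = 2 ∨ j = 3) (hz1 : j = 1 → z < 2 / (1 - q ^ 2)) :
    Filter.Tendsto (fun n : ℕ => ∑' k : ℕ, sterm q j μ (q^n * z) k) Filter.atTop
      (nhds (qGammaInv q (μ + 1))) := by
  have hq2 : (0:ℝ) ≤ q^2 := by positivity
  have hq21 : (q:ℝ)^2 < 1 := by nlinarith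
  have hzh : (0:ℝ) < (z/2) ^ μ := Real.rpow_pos_of_pos (by linarith) μ
  have hb : Summable (fun k : ℕ => |sterm q j μ z k|) := by
    have h := (bterm_abs_summable hq0 hq1 hμ hz hj hz1).mul_left (((z/2) ^ μ)⁻¹)
    refine h.congr fun k => ?_
    rw [bterm_eq_sterm hq0 hz k, abs_mul, abs_of_pos hzh]
    field_simp
  have h := tendsto_tsum_of_dominated_convergence
    (𝓕 := Filter.atTop) (f := fun (n : ℕ) (k : ℕ) => sterm q j μ (q^n * z) k)
    (g := fun k : ℕ => if k = 0 then qGammaInv q (μ + 1) else 0)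
    (bound := fun k : ℕ => |sterm q j μ z k|) hb ?_ ?_
  · have : ∑' k : ℕ, (if k = 0 then qGammaInv q (μ + 1) else 0) = qGammaInv q (μ + 1) :=
      tsum_ite_eq 0 _
    rwa [this] at h
  · intro k
    rcases Nat.eq_zero_or_pos k with hk | hk
    · subst hk
      simp only [if_pos rfl, sterm_zero]
      exact tendsto_const_nhds
    · have hk0 : k ≠ 0 := Nat.pos_iff_ne_zero.mp hk
      simp only [if_neg hk0]
      have hlt : ((q:ℝ)^2)^k < 1 := pow_lt_one₀ hq2 hq21 hk0
      have := (tendsto_pow_atTop_nhds_zero_of_lt_one (by positivity : (0:ℝ) ≤ ((q:ℝ)^2)^k)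
        hlt).mul_const (sterm q j μ z k)
      rw [zero_mul] at this
      refine Filter.Tendsto.congr (fun n => ?_) this
      rw [← sterm_pow]
  · filter_upwards with n
    intro k
    rw [Real.norm_eq_abs, sterm_pow, abs_mul]
    have h1 : |(((q^2:ℝ))^k)^n| ≤ 1 := by
      rw [abs_of_nonneg (by positivity)]
      exact pow_le_one₀ (by positivity) (pow_le_one₀ hq2 hq21.le)
    nlinarith [abs_nonneg (sterm q j μ z k), mul_le_mul_of_nonneg_right h1
      (abs_nonneg (sterm q j μ z k))]

lemma wron_fact (hq0 : 0 < q) (hq1 : q < 1) (hz : 0 < z) (n : ℕ) :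
    qWron q (fun u => Iq q j ν u) (fun u => Iq q j (-ν) u) (q^n * z)
      = q ^ (-ν) * ((∑' k : ℕ, sterm q j ν (q^n * z) k)
            * (∑' k : ℕ, sterm q j (-ν) (q^(n+1) * z) k))
        - q ^ ν * ((∑' k : ℕ, sterm q j ν (q^(n+1) * z) k)
            * (∑' k : ℕ, sterm q j (-ν) (q^n * z) k)) := by
  have hw : (0:ℝ) < q^n * z := by positivity
  have hw1 : (0:ℝ) < q^(n+1) * z := by positivity
  have hqw : q * (q^n * z) = q^(n+1) * z := by ring
  have e : ∀ (m : ℕ) (μ' : ℝ), ((q^m * z)/2) ^ μ' = q ^ ((m:ℝ) * μ') * (z/2) ^ μ' := by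
    intro m μ'
    rw [show q^m * z/2 = q^m * (z/2) by ring,
      Real.mul_rpow (by positivity) (by positivity), ← Real.rpow_natCast q m,
      ← Real.rpow_mul hq0.le]
  have epair : ∀ (m l : ℕ), (((q^m * z)/2) ^ ν) * (((q^l * z)/2) ^ (-ν))
      = q ^ ((m:ℝ)*ν - (l:ℝ)*ν) := by
    intro m l
    rw [e m ν, e l (-ν)]
    rw [show q ^ ((m:ℝ)*ν) * (z/2) ^ ν * (q ^ ((l:ℝ) * (-ν)) * (z/2) ^ (-ν))
        = (q ^ ((m:ℝ)*ν) * q ^ ((l:ℝ) * (-ν))) * ((z/2) ^ ν * (z/2) ^ (-ν)) by ring,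
      ← Real.rpow_add hq0, ← Real.rpow_add (by linarith : (0:ℝ) < z/2)]
    rw [show (m:ℝ)*ν + (l:ℝ)*(-ν) = (m:ℝ)*ν - (l:ℝ)*ν by ring,
      show ν + -ν = (0:ℝ) by ring, Real.rpow_zero, mul_one]
  rw [qWron, hqw, Iq_eq_sterm hq0 hw, Iq_eq_sterm hq0 hw1, Iq_eq_sterm hq0 hw,
    Iq_eq_sterm hq0 hw1]
  rw [show ((q^n * z)/2) ^ ν * (∑' k : ℕ, sterm q j ν (q^n * z) k)
        * (((q^(n+1) * z)/2) ^ (-ν) * (∑' k : ℕ, sterm q j (-ν) (q^(n+1) * z) k))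
      = (((q^n * z)/2) ^ ν * (((q^(n+1) * z)/2) ^ (-ν)))
        * ((∑' k : ℕ, sterm q j ν (q^n * z) k)
            * (∑' k : ℕ, sterm q j (-ν) (q^(n+1) * z) k)) by ring,
    show ((q^(n+1) * z)/2) ^ ν * (∑' k : ℕ, sterm q j ν (q^(n+1) * z) k)
        * (((q^n * z)/2) ^ (-ν) * (∑' k : ℕ, sterm q j (-ν) (q^n * z) k))
      = (((q^(n+1) * z)/2) ^ ν * (((q^n * z)/2) ^ (-ν)))
        * ((∑' k : ℕ, sterm q j ν (q^(n+1) * z) k)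
            * (∑' k : ℕ, sterm q j (-ν) (q^n * z) k)) by ring,
    epair n (n+1), epair (n+1) n]
  congr 3
  · congr 1; push_cast; ring
  · congr 1; push_cast; ring

lemma wron_limit (hq0 : 0 < q) (hq1 : q < 1) (hν : ∀ n : ℤ, ν ≠ n) (hz : 0 < z)
    (hj : j = 1 ∨ j = 2 ∨ j = 3) (hz1 : j = 1 → z < 2 / (1 - q ^ 2)) :
    Filter.Tendsto
      (fun n : ℕ => qWron q (fun u => Iq q j ν u) (fun u => Iq q j (-ν) u) (q^n * z))
      Filter.atTop
      (nhds ((q ^ (-ν) - q ^ ν) * (qGammaInv q (ν + 1) * qGammaInv q (-ν + 1)))) := by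
  have hν' := hν_neg hν
  have hΦ : Filter.Tendsto (fun n : ℕ => ∑' k : ℕ, sterm q j ν (q^n * z) k) Filter.atTop
      (nhds (qGammaInv q (ν + 1))) := tendsto_sIq hq0 hq1 hν hz hj hz1
  have hΨ : Filter.Tendsto (fun n : ℕ => ∑' k : ℕ, sterm q j (-ν) (q^n * z) k) Filter.atTop
      (nhds (qGammaInv q (-ν + 1))) := tendsto_sIq hq0 hq1 hν' hz hj hz1
  have hΦ1 : Filter.Tendsto (fun n : ℕ => ∑' k : ℕ, sterm q j ν (q^(n+1) * z) k)
      Filter.atTop (nhds (qGammaInv q (ν + 1))) := by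
    exact hΦ.comp (Filter.tendsto_add_atTop_nat 1)
  have hΨ1 : Filter.Tendsto (fun n : ℕ => ∑' k : ℕ, sterm q j (-ν) (q^(n+1) * z) k)
      Filter.atTop (nhds (qGammaInv q (-ν + 1))) := by
    exact hΨ.comp (Filter.tendsto_add_atTop_nat 1)
  have h := ((tendsto_const_nhds (x := q ^ (-ν))).mul (hΦ.mul hΨ1)).sub
    ((tendsto_const_nhds (x := q ^ ν)).mul (hΦ1.mul hΨ))
  rw [show (q ^ (-ν) - q ^ ν) * (qGammaInv q (ν + 1) * qGammaInv q (-ν + 1))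
      = q ^ (-ν) * (qGammaInv q (ν + 1) * qGammaInv q (-ν + 1))
        - q ^ ν * (qGammaInv q (ν + 1) * qGammaInv q (-ν + 1)) by ring]
  refine Filter.Tendsto.congr (fun n => ?_) h
  rw [wron_fact hq0 hq1 hz n]

end Limit


/-- for non-integer `ν`, the q-Wronskian of `I_ν^{(j)}` and `I_{-ν}^{(j)}` is
nonzero away from the points `2 q^{-r}/(1-q²)`, so the two functions form a fundamental
system of solutions of the q-difference equation. -/
theorem stmt4 (q ν : ℝ) (hq0 : 0 < q) (hq1 : q < 1) (hν : ∀ n : ℤ, ν ≠ n)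
    (j : ℕ) (hj : j = 1 ∨ j = 2 ∨ j = 3)
    (z : ℝ) (hz : 0 < z)
    (hzr : ∀ r : ℕ, z ≠ 2 * q ^ (-(r : ℝ)) / (1 - q ^ 2))
    (hz1 : j = 1 → z < 2 / (1 - q ^ 2)) :
    qWron q (fun w => Iq q j ν w) (fun w => Iq q j (-ν) w) z ≠ 0 := by
  have hq2 : (0:ℝ) < 1 - q^2 := by nlinarith
  have hγ1 : qGammaInv q (ν+1) ≠ 0 := by
    refine gammaInv_ne_zero hq0 hq1 fun n h => hν (-(n+1)) ?_
    push_cast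
    linarith
  have hγ2 : qGammaInv q (-ν+1) ≠ 0 := by
    refine gammaInv_ne_zero hq0 hq1 fun n h => hν (n+1) ?_
    push_cast
    linarith
  have hqq : q^(-ν) - q^ν ≠ 0 := by
    rw [sub_ne_zero]
    intro heq
    rw [Real.rpow_def_of_pos hq0, Real.rpow_def_of_pos hq0, Real.exp_eq_exp] at heq
    have hlq : Real.log q ≠ 0 := ne_of_lt (Real.log_neg hq0 hq1)
    have hν0 : -ν = ν := mul_left_cancel₀ hlq heq
    exact hν 0 (by push_cast; linarith)
  have hL : (q^(-ν) - q^ν) * (qGammaInv q (ν+1) * qGammaInv q (-ν+1)) ≠ 0 :=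
    mul_ne_zero hqq (mul_ne_zero hγ1 hγ2)
  obtain ⟨n0, hn0⟩ := ((wron_limit hq0 hq1 hν hz hj hz1).eventually_ne hL).exists
  have hstep : ∀ m : ℕ,
      qWron q (fun u => Iq q j ν u) (fun u => Iq q j (-ν) u) (q^(m+1) * z) ≠ 0 →
      qWron q (fun u => Iq q j ν u) (fun u => Iq q j (-ν) u) (q^m * z) ≠ 0 := by
    intro m hm
    have hw : 0 < q^m * z := by positivity
    have hwle : q^m * z ≤ z := by
      have h1 : q^m ≤ 1 := pow_le_one₀ hq0.le hq1.le
      nlinarith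
    have hw1 : j = 1 → q^m * z < 2/(1-q^2) := fun h => lt_of_le_of_lt hwle (hz1 h)
    have heq := wstep hq0 hq1 hν hj hw hw1
    rw [show q * (q^m * z) = q^(m+1) * z by ring] at heq
    have hfac2 : (1 - (if j = 2 then (1-q^2)^2/4*q^2*(q^m*z)^2 else 0)) ≠ 0 := by
      rcases hj with h|h|h
      · subst h; rw [if_neg (by norm_num : ¬ (1:ℕ) = 2)]; norm_num
      · subst h
        rw [if_pos rfl]
        intro hf
        rw [sub_eq_zero] at hf
        apply hzr (m+1)
        have hq1m : (0:ℝ) < q^(m+1) := by positivity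
        have ha : (0:ℝ) < z*(1-q^2)*q^(m+1)/2 := by positivity
        have hsq : (z*(1-q^2)*q^(m+1)/2 - 1) * (z*(1-q^2)*q^(m+1)/2 + 1) = 0 := by
          linear_combination (-1:ℝ) * hf
        have ha1 : z*(1-q^2)*q^(m+1)/2 = 1 := by
          rcases mul_eq_zero.1 hsq with h'|h'
          · linarith
          · linarith
        have hrp : q^(-((m+1:ℕ):ℝ)) = (q^(m+1))⁻¹ := by
          rw [Real.rpow_neg hq0.le, Real.rpow_natCast]
        rw [hrp]
        field_simp [hq1m.ne', hq2.ne']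
        linear_combination (2:ℝ) * ha1
      · subst h; rw [if_neg (by norm_num : ¬ (3:ℕ) = 2)]; norm_num
    intro h0
    rw [h0, mul_zero] at heq
    exact (mul_ne_zero hfac2 hm) heq.symm
  have main : ∀ n : ℕ,
      qWron q (fun u => Iq q j ν u) (fun u => Iq q j (-ν) u) (q^n * z) ≠ 0 →
      qWron q (fun u => Iq q j ν u) (fun u => Iq q j (-ν) u) z ≠ 0 := by
    intro n
    induction n with
    | zero => intro h; simpa using h
    | succ n ih => intro h; exact ih (hstep n h)
  exact main n0 hn0

end
end

section
/- For every ν ∈ ℝ∖ℤ and every real z > 0, the q-Wronskian of the functions z ↦ I_ν^{(3)}((1-q²)z;q²) and z ↦ K_ν^{(3)}((1-q²)z;q²) is the constant W(I_ν^{(3)}, K_ν^{(3)})(z) = (1/2) q^{-ν²} (1-q²); in particular it is nonzero, so I_ν^{(3)} and K_ν^{(3)} form a fundamental system of solutions of the q-difference equation f(q⁻¹z) - (q^{-ν}+q^{ν})f(z) + f(qz) = q^{-1}((1-q²)²/4) z² f(z). -/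
open Real Filter

noncomputable section

/-- The (real-valued) q-Macdonald function of kind 3:
`K_ν^{(3)}((1-q²)z;q²) = (1/2) q^{-ν²+ν} Γ_{q²}(ν) Γ_{q²}(1-ν) [I_{-ν}^{(3)} - I_ν^{(3)}]`. -/
def Kq3 (q ν z : ℝ) : ℝ :=
  1 / 2 * q ^ (-ν ^ 2 + ν) * qGamma q ν * qGamma q (1 - ν)
    * (Iq q 3 (-ν) z - Iq q 3 ν z)

namespace Stmt17Aux

variable {q ν : ℝ}

lemma sum_log_small (hq0 : 0 < q) (hq1 : q < 1) {b : ℝ} (hb0 : 0 ≤ b)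
    (hb : b ≤ (1 - q ^ 2) / 2) :
    Summable fun j : ℕ => Real.log (1 - b * (q ^ 2) ^ j) := by
  have hq2 : 0 < q ^ 2 := by positivity
  have hq21 : q ^ 2 < 1 := by nlinarith
  have hx : ∀ j : ℕ, 0 ≤ b * (q ^ 2) ^ j ∧ b * (q ^ 2) ^ j ≤ 1 / 2 := by
    intro j
    have h1 : (q ^ 2) ^ j ≤ 1 := pow_le_one₀ hq2.le hq21.le
    constructor
    · positivity
    · nlinarith [mul_le_mul_of_nonneg_left h1 hb0]
  have hbound : ∀ j : ℕ, |Real.log (1 - b * (q ^ 2) ^ j)| ≤ 2 * b * (q ^ 2) ^ j := by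
    intro j
    obtain ⟨h0, h12⟩ := hx j
    set x := b * (q ^ 2) ^ j with hxdef
    have h1x : (1 : ℝ) / 2 ≤ 1 - x := by linarith
    have h1xpos : 0 < 1 - x := by linarith
    have hlogle : Real.log (1 - x) ≤ 0 := Real.log_nonpos (by linarith) (by linarith)
    rw [abs_of_nonpos hlogle]
    have := Real.log_le_sub_one_of_pos (x := (1 - x)⁻¹) (by positivity)
    rw [Real.log_inv] at this
    have hinv : (1 - x)⁻¹ - 1 = x / (1 - x) := by field_simp; ring
    have h2 : x / (1 - x) ≤ 2 * x := by
      rw [div_le_iff₀ h1xpos]; nlinarith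
    nlinarith [this]
  have hgeo : Summable fun j : ℕ => 2 * b * (q ^ 2) ^ j :=
    (summable_geometric_of_lt_one hq2.le hq21).mul_left (2 * b)
  exact Summable.of_abs (Summable.of_nonneg_of_le (fun j => abs_nonneg _)
    hbound hgeo)

lemma hasProd_small (hq0 : 0 < q) (hq1 : q < 1) {b : ℝ} (hb0 : 0 ≤ b)
    (hb : b ≤ (1 - q ^ 2) / 2) :
    HasProd (fun j : ℕ => 1 - b * (q ^ 2) ^ j) (qPochInf b (q ^ 2)) := by
  have hq2 : 0 < q ^ 2 := by positivity
  have hq21 : q ^ 2 < 1 := by nlinarith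
  have hpos : ∀ (_ : Unit) (j : ℕ), 0 < 1 - b * (q ^ 2) ^ j := by
    intro _ j
    have h1 : (q ^ 2) ^ j ≤ 1 := pow_le_one₀ hq2.le hq21.le
    nlinarith [mul_le_mul_of_nonneg_left h1 hb0, mul_nonneg hb0 (pow_nonneg hq2.le j)]
  have := (Real.hasProd_of_hasSum_log (f := fun j : ℕ => 1 - b * (q ^ 2) ^ j)
    (hpos ()) (sum_log_small hq0 hq1 hb0 hb).hasSum).multipliable.hasProd
  exact this

lemma pochInf_pos_small (hq0 : 0 < q) (hq1 : q < 1) {b : ℝ} (hb0 : 0 ≤ b)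
    (hb : b ≤ (1 - q ^ 2) / 2) : 0 < qPochInf b (q ^ 2) := by
  have hpos : ∀ (_ : Unit) (j : ℕ), 0 < 1 - b * (q ^ 2) ^ j := by
    have hq2 : 0 < q ^ 2 := by positivity
    have hq21 : q ^ 2 < 1 := by nlinarith
    intro _ j
    have h1 : (q ^ 2) ^ j ≤ 1 := pow_le_one₀ hq2.le hq21.le
    nlinarith [mul_le_mul_of_nonneg_left h1 hb0, mul_nonneg hb0 (pow_nonneg hq2.le j)]
  have := Real.rexp_tsum_eq_tprod (f := fun j : ℕ => 1 - b * (q ^ 2) ^ j)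
    (hpos ()) (sum_log_small hq0 hq1 hb0 hb)
  have h2 := this
  rw [qPochInf, ← h2]
  exact Real.exp_pos _

lemma exists_tail (hq0 : 0 < q) (hq1 : q < 1) (a : ℝ) :
    ∃ N : ℕ, a * (q ^ 2) ^ N ≤ (1 - q ^ 2) / 2 := by
  have hq2 : 0 < q ^ 2 := by positivity
  have hq21 : q ^ 2 < 1 := by nlinarith
  have h := tendsto_pow_atTop_nhds_zero_of_lt_one hq2.le hq21
  have h2 : Tendsto (fun N : ℕ => a * (q ^ 2) ^ N) atTop (nhds 0) := by
    simpa using h.const_mul a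
  have h3 : ∀ᶠ N : ℕ in atTop, a * (q ^ 2) ^ N < (1 - q ^ 2) / 2 :=
    h2.eventually_lt_const (by nlinarith)
  exact ⟨h3.exists.choose, h3.exists.choose_spec.le⟩

lemma pochInf_split_small (hq0 : 0 < q) (hq1 : q < 1) {c : ℝ} (hc : 0 ≤ c) (m : ℕ)
    (h : c * (q ^ 2) ^ m ≤ (1 - q ^ 2) / 2) :
    qPochInf c (q ^ 2)
      = (∏ j ∈ Finset.range m, (1 - c * (q ^ 2) ^ j)) * qPochInf (c * (q ^ 2) ^ m) (q ^ 2) := by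
  have hmt : Multipliable fun n : ℕ => 1 - c * (q ^ 2) ^ (n + m) := by
    have hp : Multipliable fun j : ℕ => 1 - (c * (q ^ 2) ^ m) * (q ^ 2) ^ j :=
      ⟨_, hasProd_small hq0 hq1 (mul_nonneg hc (pow_nonneg (by positivity) m)) h⟩
    refine hp.congr fun n => ?_
    show 1 - c * (q ^ 2) ^ m * (q ^ 2) ^ n = 1 - c * (q ^ 2) ^ (n + m)
    rw [pow_add]; ring
  have heq := Multipliable.prod_mul_tprod_nat_mul' (f := fun j : ℕ => 1 - c * (q ^ 2) ^ j) (k := m) hmt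
  rw [qPochInf, ← heq, qPochInf]
  congr 1
  refine tprod_congr fun n => ?_
  show 1 - c * (q ^ 2) ^ (n + m) = 1 - c * (q ^ 2) ^ m * (q ^ 2) ^ n
  rw [pow_add]; ring

lemma pochInf_split (hq0 : 0 < q) (hq1 : q < 1) {a : ℝ} (ha : 0 ≤ a) (N : ℕ) :
    qPochInf a (q ^ 2)
      = (∏ j ∈ Finset.range N, (1 - a * (q ^ 2) ^ j)) * qPochInf (a * (q ^ 2) ^ N) (q ^ 2) := by
  obtain ⟨K, hK⟩ := exists_tail hq0 hq1 (a * (q ^ 2) ^ N)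
  have hq2 : (0:ℝ) < q ^ 2 := by positivity
  have haN : 0 ≤ a * (q ^ 2) ^ N := mul_nonneg ha (pow_nonneg hq2.le N)
  have hM : a * (q ^ 2) ^ (N + K) ≤ (1 - q ^ 2) / 2 := by
    rw [pow_add, ← mul_assoc]; exact hK
  have h1 := pochInf_split_small hq0 hq1 ha (N + K) hM
  have h2 := pochInf_split_small hq0 hq1 haN K hK
  rw [h1, h2, Finset.prod_range_add]
  have e1 : ∀ j : ℕ, 1 - a * (q ^ 2) ^ (N + j) = 1 - a * (q ^ 2) ^ N * (q ^ 2) ^ j := by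
    intro j; rw [pow_add]; ring
  have e2 : a * (q ^ 2) ^ (N + K) = a * (q ^ 2) ^ N * (q ^ 2) ^ K := by
    rw [pow_add]; ring
  simp only [e1, e2]
  ring

lemma pochInf_ne_zero (hq0 : 0 < q) (hq1 : q < 1) {a : ℝ} (ha : 0 ≤ a)
    (h : ∀ j : ℕ, 1 - a * (q ^ 2) ^ j ≠ 0) : qPochInf a (q ^ 2) ≠ 0 := by
  obtain ⟨N, hN⟩ := exists_tail hq0 hq1 a
  rw [pochInf_split hq0 hq1 ha N]
  refine mul_ne_zero (Finset.prod_ne_zero_iff.mpr fun j _ => h j) ?_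
  exact (pochInf_pos_small hq0 hq1 (mul_nonneg ha (pow_nonneg (by positivity) N)) hN).ne'

lemma pochInf_peel (hq0 : 0 < q) (hq1 : q < 1) {a : ℝ} (ha : 0 ≤ a) :
    qPochInf a (q ^ 2) = (1 - a) * qPochInf (a * q ^ 2) (q ^ 2) := by
  have h := pochInf_split hq0 hq1 ha 1
  simpa using h

lemma qrpow_ne_one (hq0 : 0 < q) (hq1 : q < 1) {x : ℝ} (hx : x ≠ 0) : q ^ x ≠ 1 := by
  intro h
  rw [Real.rpow_def_of_pos hq0, Real.exp_eq_one_iff] at h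
  have hlog : Real.log q ≠ 0 := by
    have := Real.log_neg hq0 hq1
    linarith
  exact hx (by rcases mul_eq_zero.mp h with h' | h' <;> [exact absurd h' hlog; exact h'])

lemma rpow_mul_pow (hq0 : 0 < q) (x : ℝ) (j : ℕ) :
    q ^ (2 * x) * (q ^ 2) ^ j = q ^ (2 * (x + j)) := by
  have h1 : (q ^ 2) ^ j = q ^ ((2 * j : ℕ) : ℝ) := by
    rw [Real.rpow_natCast, pow_mul]
  rw [h1, ← Real.rpow_add hq0]
  congr 1
  push_cast
  ring

lemma factor_ne_zero (hq0 : 0 < q) (hq1 : q < 1) {x : ℝ} (hx : ∀ j : ℕ, x + j ≠ 0) (j : ℕ) :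
    1 - q ^ (2 * x) * (q ^ 2) ^ j ≠ 0 := by
  rw [rpow_mul_pow hq0]
  intro h
  have h2 : q ^ (2 * (x + (j:ℝ))) = 1 := by linarith
  have h3 : 2 * (x + (j:ℝ)) ≠ 0 := by
    have := hx j; intro h4; exact this (by linarith)
  exact qrpow_ne_one hq0 hq1 h3 h2

lemma pochInf_x_ne_zero (hq0 : 0 < q) (hq1 : q < 1) {x : ℝ} (hx : ∀ j : ℕ, x + j ≠ 0) :
    qPochInf (q ^ (2 * x)) (q ^ 2) ≠ 0 :=
  pochInf_ne_zero hq0 hq1 (Real.rpow_pos_of_pos hq0 _).le (factor_ne_zero hq0 hq1 hx)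

lemma pochInf_q2_ne_zero (hq0 : 0 < q) (hq1 : q < 1) :
    qPochInf (q ^ 2) (q ^ 2) ≠ 0 := by
  have hq2 : (0:ℝ) < q ^ 2 := by positivity
  have hq21 : q ^ 2 < 1 := by nlinarith
  refine pochInf_ne_zero hq0 hq1 hq2.le fun j => ?_
  have : q ^ 2 * (q ^ 2) ^ j < 1 := by
    calc q ^ 2 * (q ^ 2) ^ j ≤ q ^ 2 * 1 :=
          mul_le_mul_of_nonneg_left (pow_le_one₀ hq2.le hq21.le) hq2.le
      _ < 1 := by nlinarith
  intro h; linarith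

lemma gamma_mul_gammaInv (hq0 : 0 < q) (hq1 : q < 1) {x : ℝ} (hx : ∀ j : ℕ, x + j ≠ 0) :
    qGamma q x * qGammaInv q x = 1 := by
  have hq21 : q ^ 2 < 1 := by nlinarith
  have h1 : (0:ℝ) < 1 - q ^ 2 := by linarith
  have hc : (1 - q ^ 2) ^ (1 - x) * (1 - q ^ 2) ^ (x - 1) = 1 := by
    rw [← Real.rpow_add h1]
    norm_num
  rw [qGamma, qGammaInv]
  rw [div_mul_div_comm, div_eq_one_iff_eq (mul_ne_zero (pochInf_x_ne_zero hq0 hq1 hx)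
    (pochInf_q2_ne_zero hq0 hq1))]
  linear_combination (qPochInf (q ^ (2*x)) (q^2) * qPochInf (q ^ 2) (q^2)) * hc

lemma gammaInv_succ (hq0 : 0 < q) (hq1 : q < 1) {x : ℝ} (hx : x ≠ 0) :
    qGammaInv q (x + 1) = qGammaInv q x * (1 - q ^ 2) / (1 - q ^ (2 * x)) := by
  have hq21 : q ^ 2 < 1 := by nlinarith
  have h1 : (0:ℝ) < 1 - q ^ 2 := by linarith
  have hne : 1 - q ^ (2 * x) ≠ 0 := by
    intro h
    have h2 : q ^ (2 * x) = 1 := by linarith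
    exact qrpow_ne_one hq0 hq1 (by intro h4; exact hx (by linarith)) h2
  have hexp : q ^ (2 * (x + 1)) = q ^ (2 * x) * q ^ 2 := by
    have : q ^ ((2:ℕ):ℝ) = q ^ (2:ℕ) := Real.rpow_natCast q 2
    rw [← this, ← Real.rpow_add hq0]
    norm_num
    ring_nf
  have hpeel := pochInf_peel hq0 hq1 (a := q ^ (2 * x)) (Real.rpow_pos_of_pos hq0 _).le
  have hpow : (1 - q ^ 2) ^ (x + 1 - 1) = (1 - q ^ 2) ^ (x - 1) * (1 - q ^ 2) := by
    rw [show x + 1 - 1 = (x - 1) + 1 by ring, Real.rpow_add h1, Real.rpow_one]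
  rw [qGammaInv, qGammaInv, hexp, hpow]
  rw [hpeel]
  field_simp [hne, pochInf_q2_ne_zero hq0 hq1]

def Acoef (q ν : ℝ) (k : ℕ) : ℝ :=
  q ^ ((k : ℝ) * (ν + k)) * (1 - q ^ 2) ^ k / qPoch (q ^ 2) (q ^ 2) k
    * qGammaInv q (ν + k + 1)

def rho (q ν : ℝ) (k : ℕ) : ℝ :=
  q ^ (ν + 2 * k + 1) * (1 - q ^ 2) ^ 2
    / ((1 - q ^ 2 * (q ^ 2) ^ k) * (1 - q ^ (2 * (ν + k + 1))))

lemma qPoch_factor_pos (hq0 : 0 < q) (hq1 : q < 1) (j : ℕ) :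
    0 < 1 - q ^ 2 * (q ^ 2) ^ j := by
  have hq2 : (0:ℝ) < q ^ 2 := by positivity
  have hq21 : q ^ 2 < 1 := by nlinarith
  have h1 : (q ^ 2) ^ j ≤ 1 := pow_le_one₀ hq2.le hq21.le
  nlinarith

lemma qPoch_pos (hq0 : 0 < q) (hq1 : q < 1) (k : ℕ) : 0 < qPoch (q ^ 2) (q ^ 2) k :=
  Finset.prod_pos fun j _ => qPoch_factor_pos hq0 hq1 j

lemma d2_ne (hq0 : 0 < q) (hq1 : q < 1) (hν : ∀ k : ℕ, ν + (k:ℝ) + 1 ≠ 0) (k : ℕ) :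
    1 - q ^ (2 * (ν + (k:ℝ) + 1)) ≠ 0 := by
  intro h
  have h2 : q ^ (2 * (ν + (k:ℝ) + 1)) = 1 := by linarith
  exact qrpow_ne_one hq0 hq1 (by have := hν k; intro h4; exact this (by linarith)) h2

lemma Acoef_succ (hq0 : 0 < q) (hq1 : q < 1) (hν : ∀ k : ℕ, ν + (k:ℝ) + 1 ≠ 0) (k : ℕ) :
    Acoef q ν (k + 1) = Acoef q ν k * rho q ν k := by
  have hPk : qPoch (q ^ 2) (q ^ 2) (k + 1)
      = qPoch (q ^ 2) (q ^ 2) k * (1 - q ^ 2 * (q ^ 2) ^ k) := Finset.prod_range_succ _ _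
  have hG : qGammaInv q (ν + (k + 1 : ℕ) + 1)
      = qGammaInv q (ν + k + 1) * (1 - q ^ 2) / (1 - q ^ (2 * (ν + k + 1))) := by
    have := gammaInv_succ hq0 hq1 (x := ν + k + 1) (hν k)
    rw [← this]
    congr 1
    push_cast
    ring
  have hq' : q ^ (((k:ℝ) + 1) * (ν + ((k:ℕ):ℝ) + 1)) = q ^ ((k:ℝ) * (ν + k)) * q ^ (ν + 2 * k + 1) := by
    rw [← Real.rpow_add hq0]
    congr 1
    ring
  rw [Acoef, Acoef, rho, hPk, hG]
  push_cast
  rw [show ((k:ℝ) + 1) * (ν + ((k:ℝ) + 1)) = ((k:ℝ) + 1) * (ν + (k:ℝ) + 1) by ring, hq']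
  have hd1 : (1 - q ^ 2 * (q ^ 2) ^ k) ≠ 0 := (qPoch_factor_pos hq0 hq1 k).ne'
  have hd2 : 1 - q ^ (2 * (ν + (k:ℝ) + 1)) ≠ 0 := d2_ne hq0 hq1 hν k
  have hP : qPoch (q ^ 2) (q ^ 2) k ≠ 0 := (qPoch_pos hq0 hq1 k).ne'
  field_simp
  ring

lemma tendsto_rho_mul (hq0 : 0 < q) (hq1 : q < 1) (u : ℝ) :
    Tendsto (fun k : ℕ => rho q ν k * u) atTop (nhds 0) := by
  have hq2 : (0:ℝ) < q ^ 2 := by positivity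
  have hq21 : q ^ 2 < 1 := by nlinarith
  have hgeo : Tendsto (fun k : ℕ => (q ^ 2) ^ k) atTop (nhds 0) :=
    tendsto_pow_atTop_nhds_zero_of_lt_one hq2.le hq21
  have hnum : Tendsto (fun k : ℕ => q ^ (ν + 2 * (k:ℝ) + 1)) atTop (nhds 0) := by
    have heq : ∀ k : ℕ, q ^ (ν + 2 * (k:ℝ) + 1) = q ^ (ν + 1) * (q ^ 2) ^ k := by
      intro k
      have h1 : (q ^ 2) ^ k = q ^ ((2 * k : ℕ) : ℝ) := by rw [Real.rpow_natCast, pow_mul]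
      rw [h1, ← Real.rpow_add hq0]
      congr 1
      push_cast
      ring
    simp only [heq]
    simpa using hgeo.const_mul (q ^ (ν + 1))
  have hd1 : Tendsto (fun k : ℕ => 1 - q ^ 2 * (q ^ 2) ^ k) atTop (nhds 1) := by
    have := hgeo.const_mul (q ^ 2)
    have h2 := (tendsto_const_nhds (x := (1:ℝ)) (f := atTop (α := ℕ))).sub this
    simpa using h2
  have hd2 : Tendsto (fun k : ℕ => 1 - q ^ (2 * (ν + (k:ℝ) + 1))) atTop (nhds 1) := by
    have heq : ∀ k : ℕ, q ^ (2 * (ν + (k:ℝ) + 1)) = q ^ (2 * (ν + 1)) * (q ^ 2) ^ k := by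
      intro k
      have h1 : (q ^ 2) ^ k = q ^ ((2 * k : ℕ) : ℝ) := by rw [Real.rpow_natCast, pow_mul]
      rw [h1, ← Real.rpow_add hq0]
      congr 1
      push_cast
      ring
    simp only [heq]
    have := hgeo.const_mul (q ^ (2 * (ν + 1)))
    have h2 := (tendsto_const_nhds (x := (1:ℝ)) (f := atTop (α := ℕ))).sub this
    simpa using h2
  have : Tendsto (fun k : ℕ =>
      q ^ (ν + 2 * (k:ℝ) + 1) * (1 - q ^ 2) ^ 2
        / ((1 - q ^ 2 * (q ^ 2) ^ k) * (1 - q ^ (2 * (ν + (k:ℝ) + 1)))) * u) atTop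
      (nhds (0 * (1 - q ^ 2) ^ 2 / (1 * 1) * u)) := by
    exact (((hnum.mul_const ((1 - q ^ 2) ^ 2)).div (hd1.mul hd2) (by norm_num)).mul_const u)
  simpa [rho] using this

lemma summable_A_mul (hq0 : 0 < q) (hq1 : q < 1) (hν : ∀ k : ℕ, ν + (k:ℝ) + 1 ≠ 0)
    (u : ℝ) : Summable fun k : ℕ => Acoef q ν k * u ^ k := by
  refine summable_of_ratio_norm_eventually_le (r := 1 / 2) (by norm_num) ?_
  have h : ∀ᶠ k : ℕ in atTop, ‖rho q ν k * u‖ ≤ 1 / 2 := by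
    have := (tendsto_rho_mul (ν := ν) hq0 hq1 u).norm
    simp only [norm_zero] at this
    exact this.eventually_le_const (by norm_num)
  filter_upwards [h] with k hk
  have he : Acoef q ν (k + 1) * u ^ (k + 1) = Acoef q ν k * u ^ k * (rho q ν k * u) := by
    rw [Acoef_succ hq0 hq1 hν k, pow_succ]
    ring
  rw [he, norm_mul]
  calc ‖Acoef q ν k * u ^ k‖ * ‖rho q ν k * u‖
      ≤ ‖Acoef q ν k * u ^ k‖ * (1 / 2) :=
        mul_le_mul_of_nonneg_left hk (norm_nonneg _)
    _ = 1 / 2 * ‖Acoef q ν k * u ^ k‖ := by ring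

def Fq (q ν u : ℝ) : ℝ := ∑' k : ℕ, Acoef q ν k * u ^ k

lemma e_split1 (hq0 : 0 < q) (k : ℕ) :
    q ^ (ν + 2 * (k:ℝ) + 1) = q ^ ν * q * (q ^ 2) ^ k := by
  have h1 : (q ^ 2) ^ k = q ^ ((2 * k : ℕ) : ℝ) := by rw [Real.rpow_natCast, pow_mul]
  have h2 : q ^ (ν + 2 * (k:ℝ) + 1) = q ^ ν * q ^ ((2 * k : ℕ) : ℝ) * q ^ (1:ℝ) := by
    rw [← Real.rpow_add hq0, ← Real.rpow_add hq0]
    congr 1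
    push_cast
    ring
  rw [h2, ← h1, Real.rpow_one]
  ring

lemma e_split2 (hq0 : 0 < q) (k : ℕ) :
    q ^ (2 * (ν + (k:ℝ) + 1)) = (q ^ ν) ^ 2 * q ^ 2 * (q ^ 2) ^ k := by
  have h1 : (q ^ 2) ^ k = q ^ ((2 * k : ℕ) : ℝ) := by rw [Real.rpow_natCast, pow_mul]
  have h3 : (q ^ ν) ^ (2:ℕ) = q ^ (ν * 2) := by
    rw [Real.rpow_mul hq0.le, show (2:ℝ) = ((2:ℕ):ℝ) by norm_num,
      Real.rpow_natCast (q ^ ν) 2]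
  have h4 : (q:ℝ) ^ (2:ℕ) = q ^ ((2:ℕ) : ℝ) := (Real.rpow_natCast q 2).symm
  have h2 : q ^ (2 * (ν + (k:ℝ) + 1)) = q ^ (ν * 2) * q ^ ((2:ℕ):ℝ) * q ^ ((2 * k : ℕ) : ℝ) := by
    rw [← Real.rpow_add hq0, ← Real.rpow_add hq0]
    congr 1
    push_cast
    ring
  rw [h2, ← h1, ← h3, ← h4]

lemma term_id (hq0 : 0 < q) (hq1 : q < 1) (hν : ∀ k : ℕ, ν + (k:ℝ) + 1 ≠ 0) (u : ℝ) (k : ℕ) :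
    q ^ (-ν) * (Acoef q ν (k+1) * u ^ (k+1))
      + q ^ ν * (Acoef q ν (k+1) * (q ^ 2 * (q ^ 2 * u)) ^ (k+1))
      - (q ^ (-ν) + q ^ ν) * (Acoef q ν (k+1) * (q ^ 2 * u) ^ (k+1))
    = q⁻¹ * (1 - q ^ 2) ^ 2 * (q ^ 2 * u) * (Acoef q ν k * (q ^ 2 * u) ^ k) := by
  have hd1 : (1 - q ^ 2 * (q ^ 2) ^ k) ≠ 0 := (qPoch_factor_pos hq0 hq1 k).ne'
  have hd2 : 1 - q ^ (2 * (ν + (k:ℝ) + 1)) ≠ 0 := d2_ne hq0 hq1 hν k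
  have ha : q ^ ν ≠ 0 := (Real.rpow_pos_of_pos hq0 ν).ne'
  have hq : q ≠ 0 := hq0.ne'
  have hneg : q ^ (-ν) = (q ^ ν)⁻¹ := Real.rpow_neg hq0.le ν
  rw [Acoef_succ hq0 hq1 hν k, rho, e_split1 hq0 k, e_split2 hq0 k, hneg]
  rw [e_split2 hq0 k] at hd2
  field_simp
  ring

lemma EqF (hq0 : 0 < q) (hq1 : q < 1) (hν : ∀ k : ℕ, ν + (k:ℝ) + 1 ≠ 0) (u : ℝ) :
    q ^ (-ν) * Fq q ν u + q ^ ν * Fq q ν (q ^ 2 * (q ^ 2 * u))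
      - (q ^ (-ν) + q ^ ν) * Fq q ν (q ^ 2 * u)
    = q⁻¹ * (1 - q ^ 2) ^ 2 * (q ^ 2 * u) * Fq q ν (q ^ 2 * u) := by
  have s1 : Summable fun k : ℕ => q ^ (-ν) * (Acoef q ν k * u ^ k) :=
    (summable_A_mul hq0 hq1 hν u).mul_left _
  have s2 : Summable fun k : ℕ => q ^ ν * (Acoef q ν k * (q ^ 2 * (q ^ 2 * u)) ^ k) :=
    (summable_A_mul hq0 hq1 hν _).mul_left _
  have s3 : Summable fun k : ℕ =>
      (q ^ (-ν) + q ^ ν) * (Acoef q ν k * (q ^ 2 * u) ^ k) :=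
    (summable_A_mul hq0 hq1 hν _).mul_left _
  rw [Fq, Fq, Fq, ← tsum_mul_left, ← tsum_mul_left, ← tsum_mul_left, ← tsum_mul_left,
    ← s1.tsum_add s2, ← (s1.add s2).tsum_sub s3]
  rw [((s1.add s2).sub s3).tsum_eq_zero_add]
  have hg0 : q ^ (-ν) * (Acoef q ν 0 * u ^ 0)
      + q ^ ν * (Acoef q ν 0 * (q ^ 2 * (q ^ 2 * u)) ^ 0)
      - (q ^ (-ν) + q ^ ν) * (Acoef q ν 0 * (q ^ 2 * u) ^ 0) = 0 := by
    simp only [pow_zero]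
    ring
  rw [hg0, zero_add]
  exact tsum_congr (term_id hq0 hq1 hν u)

def V (q ν u : ℝ) : ℝ :=
  q ^ (-ν) * Fq q ν u * Fq q (-ν) (q ^ 2 * u) - q ^ ν * Fq q ν (q ^ 2 * u) * Fq q (-ν) u

lemma V_step (hq0 : 0 < q) (hq1 : q < 1) (hν : ∀ k : ℕ, ν + (k:ℝ) + 1 ≠ 0)
    (hν' : ∀ k : ℕ, -ν + (k:ℝ) + 1 ≠ 0) (u : ℝ) :
    V q ν u = V q ν (q ^ 2 * u) := by
  have h1 := EqF hq0 hq1 hν u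
  have h2 := EqF (ν := -ν) hq0 hq1 hν' u
  rw [neg_neg] at h2
  rw [V, V]
  linear_combination Fq q (-ν) (q ^ 2 * u) * h1 - Fq q ν (q ^ 2 * u) * h2

lemma V_const (hq0 : 0 < q) (hq1 : q < 1) (hν : ∀ k : ℕ, ν + (k:ℝ) + 1 ≠ 0)
    (hν' : ∀ k : ℕ, -ν + (k:ℝ) + 1 ≠ 0) (u : ℝ) (n : ℕ) :
    V q ν u = V q ν ((q ^ 2) ^ n * u) := by
  induction n with
  | zero => simp
  | succ n ih =>
    rw [ih, V_step hq0 hq1 hν hν' ((q ^ 2) ^ n * u)]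
    congr 1
    rw [pow_succ]
    ring

lemma Acoef_zero : Acoef q ν 0 = qGammaInv q (ν + 1) := by
  simp [Acoef, qPoch]

set_option maxHeartbeats 1000000 in
lemma F_sub_bound (hq0 : 0 < q) (hq1 : q < 1) (hν : ∀ k : ℕ, ν + (k:ℝ) + 1 ≠ 0)
    {u U : ℝ} (hu : 0 ≤ u) (huU : u ≤ U) (hU : 0 < U) :
    |Fq q ν u - Acoef q ν 0| ≤ (∑' k : ℕ, |Acoef q ν (k + 1)| * U ^ k) * u := by
  have hsum := summable_A_mul hq0 hq1 hν u
  have hshift : Fq q ν u - Acoef q ν 0 = ∑' k : ℕ, Acoef q ν (k + 1) * u ^ (k + 1) := by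
    rw [Fq, hsum.tsum_eq_zero_add, pow_zero, mul_one]
    ring
  have hfac : ∑' k : ℕ, Acoef q ν (k + 1) * u ^ (k + 1)
      = u * ∑' k : ℕ, Acoef q ν (k + 1) * u ^ k := by
    rw [← tsum_mul_left]
    exact tsum_congr fun k => by ring
  have hgs : Summable fun k : ℕ => |Acoef q ν (k + 1)| * U ^ k := by
    have h1 : Summable fun k : ℕ => Acoef q ν (k + 1) * U ^ (k + 1) :=
      (summable_nat_add_iff 1).mpr (summable_A_mul hq0 hq1 hν U)
    have h2 := (h1.abs.mul_right U⁻¹)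
    refine h2.congr fun k => ?_
    have hUc : U ^ (k + 1) * U⁻¹ = U ^ k := by
      rw [pow_succ, mul_assoc, mul_inv_cancel₀ hU.ne', mul_one]
    rw [abs_mul, abs_pow, abs_of_pos hU, mul_assoc, hUc]
  have hbound : ∀ k : ℕ, ‖Acoef q ν (k + 1) * u ^ k‖ ≤ |Acoef q ν (k + 1)| * U ^ k := by
    intro k
    rw [Real.norm_eq_abs, abs_mul, abs_pow, abs_of_nonneg hu]
    exact mul_le_mul_of_nonneg_left (pow_le_pow_left₀ hu huU k) (abs_nonneg _)
  have hnorm : ‖∑' k : ℕ, Acoef q ν (k + 1) * u ^ k‖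
      ≤ ∑' k : ℕ, |Acoef q ν (k + 1)| * U ^ k :=
    tsum_of_norm_bounded hgs.hasSum hbound
  rw [hshift, hfac, abs_mul, abs_of_nonneg hu]
  rw [Real.norm_eq_abs] at hnorm
  calc u * |∑' k : ℕ, Acoef q ν (k + 1) * u ^ k|
      ≤ u * ∑' k : ℕ, |Acoef q ν (k + 1)| * U ^ k :=
        mul_le_mul_of_nonneg_left hnorm hu
    _ = (∑' k : ℕ, |Acoef q ν (k + 1)| * U ^ k) * u := by ring

lemma F_tendsto (hq0 : 0 < q) (hq1 : q < 1) (hν : ∀ k : ℕ, ν + (k:ℝ) + 1 ≠ 0)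
    {U : ℝ} (hU : 0 < U) :
    Tendsto (fun n : ℕ => Fq q ν ((q ^ 2) ^ n * U)) atTop (nhds (qGammaInv q (ν + 1))) := by
  have hq2 : (0:ℝ) < q ^ 2 := by positivity
  have hq21 : q ^ 2 < 1 := by nlinarith
  set C := ∑' k : ℕ, |Acoef q ν (k + 1)| * U ^ k with hC
  have hb : ∀ n : ℕ, ‖Fq q ν ((q ^ 2) ^ n * U) - Acoef q ν 0‖ ≤ C * ((q ^ 2) ^ n * U) := by
    intro n
    rw [Real.norm_eq_abs]
    refine F_sub_bound hq0 hq1 hν (by positivity) ?_ hU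
    calc (q ^ 2) ^ n * U ≤ 1 * U :=
          mul_le_mul_of_nonneg_right (pow_le_one₀ hq2.le hq21.le) hU.le
      _ = U := one_mul U
  have hg : Tendsto (fun n : ℕ => C * ((q ^ 2) ^ n * U)) atTop (nhds 0) := by
    have := (tendsto_pow_atTop_nhds_zero_of_lt_one hq2.le hq21).const_mul C
    have h2 := this.mul_const U
    simpa [mul_assoc] using h2
  have h0 : Tendsto (fun n : ℕ => Fq q ν ((q ^ 2) ^ n * U) - Acoef q ν 0) atTop (nhds 0) :=
    squeeze_zero_norm hb hg
  have := tendsto_sub_nhds_zero_iff.mp h0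
  rwa [Acoef_zero] at this

lemma Iq_eq (hq0 : 0 < q) {w : ℝ} (hw : 0 < w) :
    Iq q 3 ν w = (w / 2) ^ ν * Fq q ν ((w / 2) ^ 2) := by
  have hw2 : 0 < w / 2 := by linarith
  rw [Iq, Fq, ← tsum_mul_left]
  refine tsum_congr fun k => ?_
  have hdelta : (2 - delta 3) * (k : ℝ) * (ν + k) = (k : ℝ) * (ν + k) := by
    norm_num [delta]
  have hsplit : (w / 2) ^ (ν + 2 * (k:ℝ)) = (w / 2) ^ ν * ((w / 2) ^ 2) ^ k := by
    have h1 : ((w / 2) ^ 2) ^ k = (w / 2) ^ ((2 * k : ℕ) : ℝ) := by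
      rw [Real.rpow_natCast, pow_mul]
    rw [h1, ← Real.rpow_add hw2]
    congr 1
    push_cast
    ring
  rw [hdelta, hsplit, Acoef]
  ring

end Stmt17Aux

open Stmt17Aux in
/-- `W(I_ν^{(3)}, K_ν^{(3)})(z) = (1/2) q^{-ν²} (1-q²) ≠ 0`, so the pair
forms a fundamental system of solutions of the kind-3 q-difference equation. -/
theorem stmt17 (q ν : ℝ) (hq0 : 0 < q) (hq1 : q < 1) (hν : ∀ n : ℤ, ν ≠ n)
    (z : ℝ) (hz : 0 < z) :
    qWron q (fun w => Iq q 3 ν w) (fun w => Kq3 q ν w) z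
      = 1 / 2 * q ^ (-ν ^ 2) * (1 - q ^ 2)
  ∧ qWron q (fun w => Iq q 3 ν w) (fun w => Kq3 q ν w) z ≠ 0 := by
  -- integer avoidance facts
  have hν1 : ∀ k : ℕ, ν + (k:ℝ) + 1 ≠ 0 := by
    intro k h
    exact hν (-(k + 1)) (by push_cast; linarith)
  have hν2 : ∀ k : ℕ, -ν + (k:ℝ) + 1 ≠ 0 := by
    intro k h
    exact hν (k + 1) (by push_cast; linarith)
  have hνj : ∀ j : ℕ, ν + (j:ℝ) ≠ 0 := by
    intro j h
    exact hν (-j) (by push_cast; linarith)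
  have h1νj : ∀ j : ℕ, (1 - ν) + (j:ℝ) ≠ 0 := by
    intro j h
    exact hν (j + 1) (by push_cast; linarith)
  have hν0 : ν ≠ 0 := by
    intro h
    exact hν 0 (by push_cast; linarith)
  have hq2 : (0:ℝ) < q ^ 2 := by positivity
  have hq21 : q ^ 2 < 1 := by nlinarith
  set u0 : ℝ := (z / 2) ^ 2 with hu0
  have hu0pos : 0 < u0 := by positivity
  -- limit of V
  set Λ : ℝ := q ^ (-ν) * qGammaInv q (ν + 1) * qGammaInv q (-ν + 1)
      - q ^ ν * qGammaInv q (ν + 1) * qGammaInv q (-ν + 1) with hΛ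
  have hVval : V q ν u0 = Λ := by
    have h1 := F_tendsto (ν := ν) hq0 hq1 hν1 hu0pos
    have h2 := F_tendsto (ν := -ν) hq0 hq1 hν2 hu0pos
    have h1' : Tendsto (fun n : ℕ => Fq q ν (q ^ 2 * ((q ^ 2) ^ n * u0))) atTop
        (nhds (qGammaInv q (ν + 1))) := by
      have := h1.comp (tendsto_add_atTop_nat 1)
      refine this.congr fun n => ?_
      simp only [Function.comp]
      congr 1
      rw [pow_succ]
      ring
    have h2' : Tendsto (fun n : ℕ => Fq q (-ν) (q ^ 2 * ((q ^ 2) ^ n * u0))) atTop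
        (nhds (qGammaInv q (-ν + 1))) := by
      have := h2.comp (tendsto_add_atTop_nat 1)
      refine this.congr fun n => ?_
      simp only [Function.comp]
      congr 1
      rw [pow_succ]
      ring
    have hVt : Tendsto (fun n : ℕ => V q ν ((q ^ 2) ^ n * u0)) atTop (nhds Λ) := by
      simp only [V]
      exact ((tendsto_const_nhds.mul h1).mul h2').sub
        ((tendsto_const_nhds.mul h1').mul h2)
    have hconst : (fun n : ℕ => V q ν ((q ^ 2) ^ n * u0)) = fun _ => V q ν u0 := by
      funext n
      exact (V_const hq0 hq1 hν1 hν2 u0 n).symm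
    rw [hconst] at hVt
    exact tendsto_nhds_unique tendsto_const_nhds hVt
  -- expressing the Wronskian via V
  have hqz : 0 < q * z := by positivity
  have hz2 : 0 < z / 2 := by linarith
  have hIz : Iq q 3 ν z = (z / 2) ^ ν * Fq q ν u0 := Iq_eq hq0 hz
  have hIz' : Iq q 3 (-ν) z = (z / 2) ^ (-ν) * Fq q (-ν) u0 := Iq_eq hq0 hz
  have harg : (q * z / 2) = q * (z / 2) := by ring
  have hargsq : (q * z / 2) ^ 2 = q ^ 2 * u0 := by rw [hu0]; ring
  have hrp : (q * z / 2) ^ ν = q ^ ν * (z / 2) ^ ν := by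
    rw [harg, Real.mul_rpow hq0.le hz2.le]
  have hrp' : (q * z / 2) ^ (-ν) = q ^ (-ν) * (z / 2) ^ (-ν) := by
    rw [harg, Real.mul_rpow hq0.le hz2.le]
  have hIqz : Iq q 3 ν (q * z) = q ^ ν * (z / 2) ^ ν * Fq q ν (q ^ 2 * u0) := by
    rw [Iq_eq hq0 hqz, hrp, hargsq]
  have hIqz' : Iq q 3 (-ν) (q * z) = q ^ (-ν) * (z / 2) ^ (-ν) * Fq q (-ν) (q ^ 2 * u0) := by
    rw [Iq_eq hq0 hqz, hrp', hargsq]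
  have hcancel : (z / 2) ^ ν * (z / 2) ^ (-ν) = 1 := by
    rw [← Real.rpow_add hz2]
    simp
  set c : ℝ := 1 / 2 * q ^ (-ν ^ 2 + ν) * qGamma q ν * qGamma q (1 - ν) with hc
  have hW : qWron q (fun w => Iq q 3 ν w) (fun w => Kq3 q ν w) z = c * V q ν u0 := by
    rw [qWron]
    simp only [Kq3, V]
    rw [hIz, hIz', hIqz, hIqz']
    linear_combination (1 / 2 * q ^ (-ν ^ 2 + ν) * qGamma q ν * qGamma q (1 - ν)
      * (q ^ (-ν) * Fq q ν u0 * Fq q (-ν) (q ^ 2 * u0)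
        - q ^ ν * Fq q ν (q ^ 2 * u0) * Fq q (-ν) u0)) * hcancel
  -- final arithmetic
  have hGsucc : qGammaInv q (ν + 1) = qGammaInv q ν * (1 - q ^ 2) / (1 - q ^ (2 * ν)) :=
    gammaInv_succ hq0 hq1 hν0
  have hGG1 : qGamma q ν * qGammaInv q ν = 1 := gamma_mul_gammaInv hq0 hq1 hνj
  have hGG2 : qGamma q (1 - ν) * qGammaInv q (1 - ν) = 1 := gamma_mul_gammaInv hq0 hq1 h1νj
  have hmν : qGammaInv q (-ν + 1) = qGammaInv q (1 - ν) := by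
    congr 1
    ring
  have h2ν : 1 - q ^ (2 * ν) ≠ 0 := by
    intro h
    have hx : 2 * ν ≠ 0 := by intro h2; exact hν0 (by linarith)
    have h2 : q ^ (2 * ν) = 1 := by linarith
    exact qrpow_ne_one hq0 hq1 hx h2
  have hsplit : q ^ ν = q ^ (-ν) * q ^ (2 * ν) := by
    rw [← Real.rpow_add hq0]
    congr 1
    ring
  have hmerge : q ^ (-ν ^ 2 + ν) * q ^ (-ν) = q ^ (-ν ^ 2) := by
    rw [← Real.rpow_add hq0]
    congr 1
    ring
  have hval : c * Λ = 1 / 2 * q ^ (-ν ^ 2) * (1 - q ^ 2) := by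
    have step1 : c * Λ = 1 / 2 * q ^ (-ν ^ 2 + ν) * qGamma q ν * qGamma q (1 - ν)
        * ((q ^ (-ν) * (1 - q ^ (2 * ν)))
          * (qGammaInv q ν * (1 - q ^ 2) / (1 - q ^ (2 * ν))) * qGammaInv q (1 - ν)) := by
      rw [hΛ, hmν, hGsucc, hc]
      linear_combination (-(1 / 2 * q ^ (-ν ^ 2 + ν) * qGamma q ν * qGamma q (1 - ν))
        * (qGammaInv q ν * (1 - q ^ 2) / (1 - q ^ (2 * ν))) * qGammaInv q (1 - ν)) * hsplit
    have step2 : (q ^ (-ν) * (1 - q ^ (2 * ν)))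
        * (qGammaInv q ν * (1 - q ^ 2) / (1 - q ^ (2 * ν)))
        = q ^ (-ν) * qGammaInv q ν * (1 - q ^ 2) := by
      rw [div_eq_mul_inv]
      have := mul_inv_cancel₀ h2ν
      linear_combination (q ^ (-ν) * qGammaInv q ν * (1 - q ^ 2)) * this
    rw [step1, step2]
    linear_combination (1 / 2 * (1 - q ^ 2))
      * (qGamma q ν * qGammaInv q ν * qGamma q (1 - ν) * qGammaInv q (1 - ν) * hmerge
        + q ^ (-ν ^ 2) * qGamma q (1 - ν) * qGammaInv q (1 - ν) * hGG1
        + q ^ (-ν ^ 2) * hGG2)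
  refine ⟨by rw [hW, hVval, hval], ?_⟩
  rw [hW, hVval, hval]
  have hpos : 0 < 1 / 2 * q ^ (-ν ^ 2) * (1 - q ^ 2) := by
    have := Real.rpow_pos_of_pos hq0 (-ν ^ 2)
    nlinarith
  exact hpos.ne'


end
end
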